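/- arXiv:1709.07922 — 5 statements merged into one kernel-verified Lean document; each statement's English description precedes it below -/
import Mathlib

section
/- For every positive integers n and k, there exists a thermodynamic binding network T = (D, M) with |D| = n - 1 primary domain types and |M| = n monomer types that has a monomer collection whose unique stable configuration consists of a single polymer of size \sum_{j=1}^{n} k^{j-1} (which equals (k^n - 1)/(k - 1) when k >= 2). Concretely, one may take D = {d_1, ..., d_{n-1}}, monomer types m_1 = {k copies of d_1}, m_j = {one d_{j-1}*, k copies of d_j} for 2 <= j <= n-1, m_n = {one d_{n-1}*}, and the monomer collection with k^{j-1} copies of m_j for each j; its unique saturated configuration is a complete k-ary tree of monomers and is stable. -/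
/-- A monomer type over a set `D` of primary domain types: for each primary
domain type it records the number of instances of that domain and of its
complementary (starred) domain on the monomer. -/
structure Monomer (D : Type) where
  prim : D → ℕ
  star : D → ℕ

/-- Instances of primary domains in the monomer collection `mon : I → Monomer D`
(`I` indexes the individual monomers). -/
def PrimInst {D I : Type} (mon : I → Monomer D) : Type :=
  Σ i : I, Σ x : D, Fin ((mon i).prim x)

/-- Instances of complementary (starred) domains in the collection `mon`. -/
def StarInst {D I : Type} (mon : I → Monomer D) : Type :=
  Σ i : I, Σ x : D, Fin ((mon i).star x)

/-- A configuration of the monomer collection `mon`: a matching between primary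
domain instances and complementary domain instances of the same domain type. -/
structure Config {D I : Type} (mon : I → Monomer D) where
  bond : PrimInst mon → Option (StarInst mon)
  inj : ∀ p q s, bond p = some s → bond q = some s → p = q
  compat : ∀ p s, bond p = some s → p.2.1 = s.2.1

namespace Config

variable {D I : Type} {mon : I → Monomer D}

/-- A configuration is saturated if no primary domain instance of some type and
complementary instance of the same type are both unmatched. -/
def Saturated (α : Config mon) : Prop :=
  ¬ ∃ (p : PrimInst mon) (s : StarInst mon),
      p.2.1 = s.2.1 ∧ α.bond p = none ∧ ∀ q, α.bond q ≠ some s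

/-- The monomer binding graph: vertices are monomers, with an edge between two
(distinct) monomers that share at least one bound pair of domain instances.
Its connected components are the polymers of the configuration. -/
def bindingGraph (α : Config mon) : SimpleGraph I where
  Adj i j := i ≠ j ∧ ∃ p s, α.bond p = some s ∧
      ((p.1 = i ∧ s.1 = j) ∨ (p.1 = j ∧ s.1 = i))
  symm := by
    constructor
    rintro i j ⟨hne, p, s, hb, hor⟩
    exact ⟨hne.symm, p, s, hb, hor.symm⟩
  loopless := by
    constructor
    rintro i ⟨hne, -⟩
    exact hne rfl

/-- The entropy `S(α)`: the number of polymers (connected components). -/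
noncomputable def entropy (α : Config mon) : ℕ :=
  Nat.card α.bindingGraph.ConnectedComponent

/-- A configuration is stable if it is saturated and has maximal entropy among
all saturated configurations of the same monomer collection. -/
def IsStable (α : Config mon) : Prop :=
  α.Saturated ∧ ∀ β : Config mon, β.Saturated → β.entropy ≤ α.entropy

/-- The size of a polymer (connected component) `C`: the number of monomers in it. -/
noncomputable def polymerSize (α : Config mon) (C : α.bindingGraph.ConnectedComponent) : ℕ :=
  Nat.card {i : I // α.bindingGraph.connectedComponentMk i = C}

/-- A monomer is free if its polymer contains no other monomer. -/
def Free (α : Config mon) (i : I) : Prop :=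
  ∀ j : I, α.bindingGraph.Reachable i j → j = i

end Config

/-- The monomer matrix `M_T` applied to a count vector `c`: component `x` is the
number of instances of domain `x` minus the number of instances of `x*` in the
collection with `c j` copies of monomer type `Mty j`. -/
def matVec {D : Type} {m : ℕ} (Mty : Fin m → Monomer D) (c : Fin m → ℕ) (x : D) : ℤ :=
  ∑ j, (c j : ℤ) * (((Mty j).prim x : ℤ) - ((Mty j).star x : ℤ))

/-!
In a saturated configuration every `d_v*` is bound, since `d_v` and `d_v*` occur equally often
(`k ^ (v + 1)` times each). Hence every monomer of level `v + 1` is bound to one of level `v`,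
and by induction on the level every saturated configuration is a single polymer (the complete
`k`-ary tree). All saturated configurations therefore have entropy `1`, so each of them is
stable, and one exists: a configuration with fewest unbound primary domains is saturated.
-/

instance {D I : Type} [Fintype D] [Fintype I] (mon : I → Monomer D) : Fintype (PrimInst mon) :=
  inferInstanceAs (Fintype (Σ i : I, Σ x : D, Fin ((mon i).prim x)))

instance {D I : Type} [Fintype D] [Fintype I] (mon : I → Monomer D) : Fintype (StarInst mon) :=
  inferInstanceAs (Fintype (Σ i : I, Σ x : D, Fin ((mon i).star x)))

def sigmaFinOfTypeEquiv {D I : Type} (m : I → D → ℕ) (x : D) :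
    {p : Σ i : I, Σ y : D, Fin (m i y) // p.2.1 = x} ≃ Σ i : I, Fin (m i x) where
  toFun p := ⟨p.1.1, Fin.cast (congrArg (m p.1.1) p.2) p.1.2.2⟩
  invFun q := ⟨⟨q.1, x, q.2⟩, rfl⟩
  left_inv := by rintro ⟨⟨i, y, t⟩, rfl⟩; rfl
  right_inv := by rintro ⟨i, t⟩; rfl

namespace Config

variable {D I : Type} {mon : I → Monomer D}

section Counting

variable [Fintype D] [DecidableEq D] [Fintype I]

theorem card_primInst_of_type (x : D) :
    Fintype.card {p : PrimInst mon // p.2.1 = x} = ∑ i, (mon i).prim x := by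
  refine (Fintype.card_congr (sigmaFinOfTypeEquiv (fun i => (mon i).prim) x)).trans ?_
  simp

theorem card_starInst_of_type (x : D) :
    Fintype.card {s : StarInst mon // s.2.1 = x} = ∑ i, (mon i).star x := by
  refine (Fintype.card_congr (sigmaFinOfTypeEquiv (fun i => (mon i).star) x)).trans ?_
  simp

/-- If `s` were unbound, saturation would bind every primary instance of its type, injectively,
to a complementary instance of that type other than `s`. -/
theorem Saturated.exists_bond_eq_some {α : Config mon} (hα : α.Saturated) (s : StarInst mon)
    (hs : ∑ i, (mon i).star s.2.1 ≤ ∑ i, (mon i).prim s.2.1) :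
    ∃ p, α.bond p = some s := by
  by_contra! hfree
  have hbound : ∀ p : PrimInst mon, p.2.1 = s.2.1 → (α.bond p).isSome := fun p hp =>
    Option.isSome_iff_ne_none.2 fun hnone => hα ⟨p, s, hp, hnone, hfree⟩
  let partner : {p : PrimInst mon // p.2.1 = s.2.1} → {t : StarInst mon // t.2.1 = s.2.1} :=
    fun p => ⟨(α.bond p.1).get (hbound p.1 p.2),
      (α.compat _ _ (Option.some_get _).symm).symm.trans p.2⟩
  have bond_eq_partner : ∀ p, α.bond p.1 = some (partner p).1 := fun p =>
    (Option.some_get _).symm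
  have partner_injective : Function.Injective partner := fun p q hpq =>
    Subtype.ext <| α.inj p.1 q.1 _ (bond_eq_partner p)
      ((bond_eq_partner q).trans (congrArg (some ∘ Subtype.val) hpq.symm))
  have hs_notMem : ⟨s, rfl⟩ ∉ Set.range partner := fun ⟨p, hp⟩ =>
    hfree p.1 ((bond_eq_partner p).trans (congrArg (some ∘ Subtype.val) hp))
  have := Fintype.card_lt_of_injective_of_notMem partner partner_injective hs_notMem
  rw [card_primInst_of_type, card_starInst_of_type] at this
  omega

end Counting

theorem reachable_of_bond_eq_some {α : Config mon} {p : PrimInst mon} {s : StarInst mon}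
    (h : α.bond p = some s) : α.bindingGraph.Reachable p.1 s.1 := by
  by_cases hps : p.1 = s.1
  · exact hps ▸ .refl _
  · exact SimpleGraph.Adj.reachable ⟨hps, p, s, h, .inl ⟨rfl, rfl⟩⟩

theorem entropy_eq_one_of_connected {α : Config mon} (h : α.bindingGraph.Connected) :
    α.entropy = 1 := by
  have := h.preconnected.subsingleton_connectedComponent
  have : Nonempty α.bindingGraph.ConnectedComponent :=
    ⟨α.bindingGraph.connectedComponentMk h.nonempty.some⟩
  exact Nat.card_unique

def unboundPrim (α : Config mon) : Set (PrimInst mon) :=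
  {p | α.bond p = none}

open Classical in
noncomputable def addBond (α : Config mon) (p : PrimInst mon) (s : StarInst mon)
    (hps : p.2.1 = s.2.1) (hs : ∀ q, α.bond q ≠ some s) : Config mon where
  bond q := if q = p then some s else α.bond q
  inj q r t hq hr := by
    split_ifs at hq hr with hqp hrp
    · exact hqp.trans hrp.symm
    · exact absurd (hq ▸ hr) (hs r)
    · exact absurd (hr ▸ hq) (hs q)
    · exact α.inj q r t hq hr
  compat q t hq := by
    split_ifs at hq with hqp
    · cases hq; exact hqp ▸ hps
    · exact α.compat q t hq

theorem unboundPrim_addBond (α : Config mon) (p : PrimInst mon) (s : StarInst mon)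
    (hps : p.2.1 = s.2.1) (hs : ∀ q, α.bond q ≠ some s) :
    (α.addBond p s hps hs).unboundPrim = α.unboundPrim \ {p} := by
  ext q
  by_cases hqp : q = p <;> simp [unboundPrim, addBond, hqp]

theorem exists_saturated [Fintype D] [Fintype I] : ∃ α : Config mon, α.Saturated := by
  obtain ⟨α, -, hmin⟩ := (measure fun α : Config mon => α.unboundPrim.ncard).wf.has_min
    Set.univ ⟨⟨fun _ => none, by simp, by simp⟩, trivial⟩
  refine ⟨α, fun ⟨p, s, hps, hp, hs⟩ => hmin (α.addBond p s hps hs) trivial ?_⟩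
  change Set.ncard _ < Set.ncard _
  rw [unboundPrim_addBond]
  exact Set.ncard_sdiff_singleton_lt_of_mem hp

end Config

section KaryTree

variable {k n : ℕ}

def treeMonomer (k : ℕ) (j : Fin n) : Monomer (Fin (n - 1)) where
  prim x := if (x : ℕ) = j then k else 0
  star x := if (x : ℕ) + 1 = j then 1 else 0

abbrev treeCollection (k n : ℕ) : (Σ j : Fin n, Fin (k ^ (j : ℕ))) → Monomer (Fin (n - 1)) :=
  fun i => treeMonomer k i.1

theorem treeMonomer_injective : Function.Injective (treeMonomer k : Fin n → _) := by
  intro j j' h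
  by_contra hne
  wlog hlt : (j : ℕ) < j' generalizing j j'
  · exact this h.symm (Ne.symm hne) (by omega)
  have := congrFun (congrArg Monomer.star h) ⟨j' - 1, by omega⟩
  simp only [treeMonomer] at this
  split_ifs at this <;> omega

theorem val_eq_of_treeMonomer_prim_ne_zero {j : Fin n} {x : Fin (n - 1)}
    (h : (treeMonomer k j).prim x ≠ 0) : (x : ℕ) = j := by
  by_contra hne
  exact h (if_neg hne)

theorem sum_treeCollection_prim (x : Fin (n - 1)) :
    ∑ i, (treeCollection k n i).prim x = k ^ ((x : ℕ) + 1) := by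
  rw [Fintype.sum_sigma, Finset.sum_eq_single ⟨x, by omega⟩]
  · simp [treeMonomer, pow_succ]
  · intro j _ hj
    simp [treeMonomer, Ne.symm (Fin.val_ne_of_ne hj)]
  · simp

theorem sum_treeCollection_star (x : Fin (n - 1)) :
    ∑ i, (treeCollection k n i).star x = k ^ ((x : ℕ) + 1) := by
  rw [Fintype.sum_sigma, Finset.sum_eq_single ⟨x + 1, by omega⟩]
  · simp [treeMonomer]
  · intro j _ hj
    simp [treeMonomer, Ne.symm (Fin.val_ne_of_ne hj)]
  · simp

theorem connected_of_saturated (hn : 0 < n) {α : Config (treeCollection k n)}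
    (hα : α.Saturated) : α.bindingGraph.Connected := by
  let root : Σ j : Fin n, Fin (k ^ (j : ℕ)) := ⟨⟨0, hn⟩, ⟨0, by simp⟩⟩
  have reachable_root : ∀ v, ∀ i : Σ j : Fin n, Fin (k ^ (j : ℕ)), (i.1 : ℕ) = v →
      α.bindingGraph.Reachable root i := by
    intro v
    induction v with
    | zero =>
      rintro ⟨⟨_, _⟩, a⟩ rfl
      obtain rfl : a = 0 := Fin.ext (Nat.lt_one_iff.1 (by simpa using a.isLt))
      rfl
    | succ v ih =>
      intro i hi
      let s : StarInst (treeCollection k n) := ⟨i, ⟨v, by omega⟩, ⟨0, by simp [treeMonomer, hi]⟩⟩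
      obtain ⟨p, hp⟩ := hα.exists_bond_eq_some s
        (by rw [sum_treeCollection_prim, sum_treeCollection_star])
      have hpv : (p.2.1 : ℕ) = v := congrArg Fin.val (α.compat p s hp)
      have hlevel : (p.1.1 : ℕ) = v :=
        hpv ▸ (val_eq_of_treeMonomer_prim_ne_zero p.2.2.pos.ne').symm
      exact (ih p.1 hlevel).trans (Config.reachable_of_bond_eq_some hp)
  have : Nonempty (Σ j : Fin n, Fin (k ^ (j : ℕ))) := ⟨root⟩
  exact ⟨fun i j => (reachable_root _ i rfl).symm.trans (reachable_root _ j rfl)⟩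

end KaryTree

theorem stmt0_general (n k : ℕ) (hn : 0 < n) :
    ∃ (D : Type) (_ : Fintype D) (Mty : Fin n → Monomer D) (c : Fin n → ℕ),
      Fintype.card D = n - 1 ∧
      Function.Injective Mty ∧
      (∑ j, c j) = ∑ j ∈ Finset.range n, k ^ j ∧
      (∃ α : Config (fun i : (Σ j : Fin n, Fin (c j)) => Mty i.1), α.IsStable) ∧
      (∀ α : Config (fun i : (Σ j : Fin n, Fin (c j)) => Mty i.1),
        α.IsStable → α.entropy = 1) := by
  have entropy_eq_one {α : Config (treeCollection k n)} (hα : α.Saturated) : α.entropy = 1 :=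
    Config.entropy_eq_one_of_connected (connected_of_saturated hn hα)
  obtain ⟨α, hα⟩ := Config.exists_saturated (mon := treeCollection k n)
  refine ⟨Fin (n - 1), inferInstance, treeMonomer k, fun j => k ^ (j : ℕ), Fintype.card_fin _,
    treeMonomer_injective, Fin.sum_univ_eq_sum_range _ n, ?_, fun β hβ => entropy_eq_one hβ.1⟩
  exact ⟨α, hα, fun β hβ => ((entropy_eq_one hβ).trans (entropy_eq_one hα).symm).le⟩

/-- For all positive `n, k` there is a TBN with `n - 1` primary
domain types and `n` monomer types, together with a monomer collection of total
size `∑_{j=1}^{n} k^{j-1}`, that has a stable configuration, and every stable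
configuration of it consists of a single polymer (hence a stable polymer of
size `∑_{j=1}^{n} k^{j-1}`). -/
theorem stmt0 (n k : ℕ) (hn : 0 < n) (hk : 0 < k) :
    ∃ (D : Type) (_ : Fintype D) (Mty : Fin n → Monomer D) (c : Fin n → ℕ),
      Fintype.card D = n - 1 ∧
      Function.Injective Mty ∧
      (∑ j, c j) = ∑ j ∈ Finset.range n, k ^ j ∧
      (∃ α : Config (fun i : (Σ j : Fin n, Fin (c j)) => Mty i.1), α.IsStable) ∧
      (∀ α : Config (fun i : (Σ j : Fin n, Fin (c j)) => Mty i.1),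
        α.IsStable → α.entropy = 1) :=
  stmt0_general n k hn
end

section
/- Let a, d, l be positive integers, let v_1, ..., v_l be vectors in ℤ^d with every component having absolute value at most a, and let K = (ad)^{d+1}. Then exactly one of the following two statements holds: (1) there exist integers n_1, ..., n_l, each in {0, 1, ..., K} and not all zero, such that \sum_{j=1}^{l} n_j v_j = 0; (2) there exists a vector h in ℤ^d with every component having absolute value at most K such that h · v_j >= 1 for every j in {1, ..., l}. -/
/-!
Either `0` lies in the convex hull of the `v j`, or Hahn–Banach separates it and gives a real `h`
with `h ⬝ᵥ v j ≥ 1` for all `j`. In the first case Carathéodory writes `0` as a positive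
combination of affinely independent `v j`; in the second, moving `h` orthogonally to its tight
constraints until a new one becomes tight yields a feasible `h` whose tight vectors span every
`v j`. Either way one is left with `m ≤ d` linearly independent integer vectors, hence with an
invertible `m × m` integer submatrix `Q`, and multiplying by `sign (det Q) • adjugate Q`
(Cramer's rule) turns the real solution into an integer one with entries at most
`m · m! · a ^ m · a ≤ (a d) ^ (d + 1)`. The alternatives are exclusive since pairing
`∑ n_j v_j = 0` with `h` gives `0 ≥ ∑ n_j > 0`.
-/

open Finset Matrix Function Submodule
open scoped Nat

namespace Matrix

variable {ι κ n : Type*} [Fintype κ]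

theorem exists_submatrix_det_ne_zero {K : Type*} [Field K] [Fintype ι] [DecidableEq κ]
    (M : Matrix ι κ K) (hM : LinearIndependent K M.col) :
    ∃ f : κ → ι, Injective f ∧ (M.submatrix f id).det ≠ 0 := by
  obtain ⟨ρ, r, hr, hspan, hli⟩ := exists_linearIndependent' K M.row
  have : Fintype ρ := Fintype.ofInjective r hr
  have hcard : Fintype.card ρ = Fintype.card κ := by
    rw [linearIndependent_iff_card_eq_finrank_span.mp hli, Set.finrank, hspan,
      ← rank_eq_finrank_span_row, ← rank_transpose]
    exact LinearIndependent.rank_matrix hM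
  let e := Fintype.equivOfCardEq hcard
  refine ⟨r ∘ e.symm, hr.comp e.symm.injective, ?_⟩
  rw [← isUnit_iff_ne_zero, ← isUnit_iff_isUnit_det, ← linearIndependent_rows_iff_isUnit]
  exact hli.comp _ e.symm.injective

theorem vecMul_extend_zero {R : Type*} [NonUnitalNonAssocSemiring R] [Fintype ι] {f : κ → ι}
    (hf : Injective f) (x : κ → R) (M : Matrix ι n R) :
    extend f x 0 ᵥ* M = x ᵥ* M.submatrix f id := by
  funext c
  refine (Fintype.sum_of_injective f hf _ _ (fun i hi => ?_) fun k => ?_).symm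
  · rw [extend_apply' _ _ _ fun ⟨k, hk⟩ => hi ⟨k, hk⟩, Pi.zero_apply, zero_mul]
  · rw [hf.extend_apply]; rfl

theorem abs_mulVec_apply_le {R : Type*} [Ring R] [LinearOrder R] [IsStrictOrderedRing R]
    {P : Matrix ι κ R} {y : κ → R} {C b : R} (hP : ∀ i c, |P i c| ≤ C) (hy : ∀ c, |y c| ≤ b)
    (i : ι) : |(P *ᵥ y) i| ≤ Fintype.card κ * (C * b) := by
  calc |(P *ᵥ y) i| ≤ ∑ c, |P i c| * |y c| := by
        simpa only [mulVec, dotProduct, abs_mul] using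
          abs_sum_le_sum_abs (fun c => P i c * y c) univ
    _ ≤ ∑ _c : κ, C * b := Finset.sum_le_sum fun c _ =>
        mul_le_mul (hP i c) (hy c) (abs_nonneg _) ((abs_nonneg _).trans (hP i c))
    _ = Fintype.card κ * (C * b) := by rw [sum_const, card_univ, nsmul_eq_mul]

variable [DecidableEq κ]

theorem abs_adjugate_apply_le (Q : Matrix κ κ ℤ) {a : ℤ} (ha : 1 ≤ a)
    (hQ : ∀ i j, |Q i j| ≤ a) (i j : κ) :
    |Q.adjugate i j| ≤ (Fintype.card κ)! * a ^ Fintype.card κ := by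
  have hrow : ∀ r c, |Q.updateRow j (Pi.single i 1) r c| ≤ a := by
    intro r c
    rcases eq_or_ne r j with rfl | hr
    · rw [updateRow_self]
      rcases eq_or_ne c i with rfl | hc
      · simpa using ha
      · simpa [hc] using zero_le_one.trans ha
    · rw [updateRow_ne hr]; exact hQ r c
  simpa [adjugate_apply, nsmul_eq_mul] using det_le (abv := AbsoluteValue.abs) hrow

theorem sign_det_smul_adjugate_mul (Q : Matrix κ κ ℤ) :
    (Q.det.sign • Q.adjugate) * Q = |Q.det| • 1 := by
  rw [smul_mul, adjugate_mul, smul_smul, Int.sign_mul_self_eq_abs]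

theorem exists_submatrix_left_inverse (K : Type*) [Field K] [CharZero K] [Fintype ι]
    (U : Matrix ι κ ℤ) (hU : LinearIndependent K (U.map (Int.cast : ℤ → K)).col)
    {a : ℤ} (ha : 1 ≤ a) (hUa : ∀ i c, |U i c| ≤ a) :
    ∃ f : κ → ι, Injective f ∧ ∃ (D : ℤ) (P : Matrix κ κ ℤ),
      1 ≤ D ∧ D ≤ (Fintype.card κ)! * a ^ Fintype.card κ ∧
      (∀ c r, |P c r| ≤ (Fintype.card κ)! * a ^ Fintype.card κ) ∧
      P * U.submatrix f id = D • 1 := by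
  obtain ⟨f, hf, hdet⟩ := exists_submatrix_det_ne_zero _ hU
  set Q := U.submatrix f id
  have hQ : ∀ r c, |Q r c| ≤ a := fun r c => hUa _ _
  have hQdet : Q.det ≠ 0 := by
    rintro h
    apply hdet
    rw [show (U.map Int.cast).submatrix f id = Q.map ((↑) : ℤ → K) from rfl, ← Int.cast_det, h,
      Int.cast_zero]
  refine ⟨f, hf, |Q.det|, Q.det.sign • Q.adjugate, Int.one_le_abs hQdet, ?_, fun c r => ?_,
    sign_det_smul_adjugate_mul Q⟩
  · simpa [nsmul_eq_mul] using det_le (abv := AbsoluteValue.abs) hQ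
  · rw [smul_apply, smul_eq_mul, abs_mul, Int.abs_sign_of_ne_zero hQdet, one_mul]
    exact abs_adjugate_apply_le Q ha hQ c r

theorem exists_vecMul_eq_const (K : Type*) [Field K] [CharZero K] [Fintype ι]
    (U : Matrix ι κ ℤ) (hU : LinearIndependent K (U.map (Int.cast : ℤ → K)).col)
    {a : ℤ} (ha : 1 ≤ a) (hUa : ∀ i c, |U i c| ≤ a) :
    ∃ (D : ℤ) (g : ι → ℤ), 1 ≤ D ∧ g ᵥ* U = (fun _ => D) ∧
      ∀ i, |g i| ≤ Fintype.card κ * ((Fintype.card κ)! * a ^ Fintype.card κ) := by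
  obtain ⟨f, hf, D, P, hD, -, hP, hPU⟩ := exists_submatrix_left_inverse K U hU ha hUa
  refine ⟨D, extend f (Pᵀ *ᵥ fun _ => 1) 0, hD, ?_, fun i => ?_⟩
  · rw [vecMul_extend_zero hf, mulVec_transpose, vecMul_vecMul, hPU, vecMul_smul, vecMul_one]
    ext; simp
  · by_cases hi : ∃ r, f r = i
    · obtain ⟨r, rfl⟩ := hi
      rw [hf.extend_apply]
      simpa using abs_mulVec_apply_le (P := Pᵀ) (y := fun _ => 1) (fun c r => hP r c)
        (fun _ => abs_one.le) r
    · rw [extend_apply' _ _ _ hi, Pi.zero_apply, abs_zero]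
      have : 0 ≤ a := zero_le_one.trans ha
      positivity

theorem exists_mulVec_eq_smul (K : Type*) [Field K] [CharZero K] [Fintype ι]
    (U : Matrix ι κ ℤ) (hU : LinearIndependent K (U.map (Int.cast : ℤ → K)).col)
    {a : ℤ} (ha : 1 ≤ a) (hUa : ∀ i c, |U i c| ≤ a) {y : ι → ℤ} {b : ℤ} (hy : ∀ i, |y i| ≤ b)
    {x : κ → K} (hx : U.map (Int.cast : ℤ → K) *ᵥ x = fun i => (y i : K)) :
    ∃ (D : ℤ) (N : κ → ℤ), 1 ≤ D ∧ D ≤ (Fintype.card κ)! * a ^ Fintype.card κ ∧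
      (∀ c, (N c : K) = D * x c) ∧
      ∀ c, |N c| ≤ Fintype.card κ * ((Fintype.card κ)! * a ^ Fintype.card κ * b) := by
  obtain ⟨f, hf, D, P, hD, hDC, hP, hPU⟩ := exists_submatrix_left_inverse K U hU ha hUa
  refine ⟨D, P *ᵥ (y ∘ f), hD, hDC, fun c => ?_, abs_mulVec_apply_le hP fun r => hy (f r)⟩
  have hQx : (U.submatrix f id).map (Int.cast : ℤ → K) *ᵥ x = fun r => (y (f r) : K) :=
    funext fun r => congrFun hx (f r)
  calc (((P *ᵥ (y ∘ f)) c : ℤ) : K)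
      = (P.map Int.cast *ᵥ ((U.submatrix f id).map Int.cast *ᵥ x)) c := by
        rw [hQx]; exact RingHom.map_mulVec (Int.castRingHom K) P (y ∘ f) c
    _ = ((P * U.submatrix f id).map Int.cast *ᵥ x) c := by
        rw [mulVec_mulVec]; congr 2; exact (Matrix.map_mul (f := Int.castRingHom K)).symm
    _ = D * x c := by
        rw [hPU, Matrix.map_smul' _ _ _ fun _ _ => Int.cast_mul _ _,
          Matrix.map_one _ Int.cast_zero Int.cast_one, smul_mulVec, one_mulVec]
        rfl

end Matrix

theorem Nat.factorial_mul_pow_le_pow_succ {m d a : ℕ} (hm : m ≤ d) (ha : 1 ≤ a) (hd : 1 ≤ d) :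
    m ! * a ^ m ≤ (a * d) ^ (d + 1) :=
  calc m ! * a ^ m ≤ d ^ d * a ^ d :=
        Nat.mul_le_mul ((Nat.factorial_le hm).trans (Nat.factorial_le_pow d))
          (Nat.pow_le_pow_right ha hm)
    _ ≤ d ^ d * a ^ d * (a * d) := Nat.le_mul_of_pos_right _ (Nat.mul_pos ha hd)
    _ = (a * d) ^ (d + 1) := by ring

theorem Nat.mul_factorial_mul_pow_mul_le {m d a : ℕ} (hm : m ≤ d) (ha : 1 ≤ a) :
    m * (m ! * a ^ m * a) ≤ (a * d) ^ (d + 1) :=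
  calc m * (m ! * a ^ m * a) ≤ d * (d ^ d * a ^ d * a) :=
        Nat.mul_le_mul hm (Nat.mul_le_mul_right _ (Nat.mul_le_mul
          ((Nat.factorial_le hm).trans (Nat.factorial_le_pow d)) (Nat.pow_le_pow_right ha hm)))
    _ = (a * d) ^ (d + 1) := by ring

theorem exists_one_le_dotProduct_of_zero_notMem_convexHull {ι n : Type*} [Fintype ι] [Fintype n]
    [DecidableEq n] (u : ι → n → ℝ) (h0 : (0 : n → ℝ) ∉ convexHull ℝ (Set.range u)) :
    ∃ h : n → ℝ, ∀ j, 1 ≤ h ⬝ᵥ u j := by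
  obtain ⟨f, s, hf0, hfs⟩ := geometric_hahn_banach_point_closed (convex_convexHull ℝ _)
    ((Set.finite_range u).isCompact_convexHull ℝ).isClosed h0
  rw [map_zero] at hf0
  refine ⟨s⁻¹ • (dotProductEquiv ℝ n).symm f.toLinearMap, fun j => ?_⟩
  rw [smul_dotProduct, smul_eq_mul, ← dotProductEquiv_apply_apply, LinearEquiv.apply_symm_apply,
    le_inv_mul_iff₀ hf0, mul_one]
  exact (hfs _ (subset_convexHull ℝ _ ⟨j, rfl⟩)).le

theorem AffineIndependent.linearIndependent_subtype_ne {k V ι : Type*} [Field k] [AddCommGroup V]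
    [Module k V] [Fintype ι] [DecidableEq ι] {z : ι → V} (hz : AffineIndependent k z)
    {w : ι → k} (hw : ∑ i, w i = 1) (hwz : ∑ i, w i • z i = 0) {i₀ : ι} (hi₀ : w i₀ ≠ 0) :
    LinearIndependent k fun i : {i // i ≠ i₀} => z i := by
  rw [Fintype.linearIndependent_iff]
  intro μ hμ
  set μ' : ι → k := fun i => if h : i = i₀ then 0 else μ ⟨i, h⟩
  have hμ'z : ∑ i, μ' i • z i = 0 := by
    rw [Fintype.sum_eq_add_sum_subtype_ne _ i₀]
    simp only [μ', dif_pos rfl, zero_smul, zero_add]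
    exact (sum_congr rfl fun c _ => by rw [dif_neg c.2]).trans hμ
  have hμ' := hz.eq_of_sum_eq_sum (s := univ) (w₁ := μ') (w₂ := (∑ i, μ' i) • w)
    (by simp [← mul_sum, hw]) (by simp [mul_smul, ← smul_sum, hwz, hμ'z])
  have hs : ∑ i, μ' i = 0 := by
    have := hμ' i₀ (mem_univ _)
    simp only [μ', dif_pos rfl, Pi.smul_apply, smul_eq_mul] at this
    exact (mul_eq_zero.mp this.symm).resolve_right hi₀
  intro c
  simpa [μ', c.2, hs] using hμ' c (mem_univ _)

theorem sum_subtype_ne_div_smul_eq_neg {k V σ : Type*} [Field k] [AddCommGroup V] [Module k V]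
    [Fintype σ] [DecidableEq σ] {z : σ → V} {w : σ → k} (hwz : ∑ s, w s • z s = 0) {s₀ : σ}
    (hs₀ : w s₀ ≠ 0) :
    ∑ c : {s // s ≠ s₀}, (w c / w s₀) • z c = -z s₀ := by
  rw [Fintype.sum_eq_add_sum_subtype_ne _ s₀] at hwz
  calc ∑ c : {s // s ≠ s₀}, (w c / w s₀) • z c
      = (w s₀)⁻¹ • ∑ c : {s // s ≠ s₀}, w c • z c := by
        simp only [smul_sum, smul_smul, div_eq_inv_mul]
    _ = -z s₀ := by rw [eq_neg_of_add_eq_zero_right hwz, smul_neg, inv_smul_smul₀ hs₀]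

section Feasible

variable {𝕜 ι n : Type*} [Field 𝕜] [LinearOrder 𝕜] [IsStrictOrderedRing 𝕜] [Fintype ι]
  [Fintype n]

theorem exists_feasible_tight_on_ray (u : ι → n → 𝕜) {h y : n → 𝕜}
    (hh : ∀ j, 1 ≤ h ⬝ᵥ u j) {k : ι} (hk : y ⬝ᵥ u k < 0) :
    ∃ t : 𝕜, (∀ j, 1 ≤ (h + t • y) ⬝ᵥ u j) ∧ ∃ k', y ⬝ᵥ u k' < 0 ∧ (h + t • y) ⬝ᵥ u k' = 1 := by
  obtain ⟨k', hk', hmin⟩ := (univ.filter fun j => y ⬝ᵥ u j < 0).exists_min_image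
    (fun j => (h ⬝ᵥ u j - 1) / -(y ⬝ᵥ u j)) ⟨k, by simpa using hk⟩
  simp only [mem_filter, mem_univ, true_and] at hk' hmin
  have hray : ∀ (t : 𝕜) j, (h + t • y) ⬝ᵥ u j = h ⬝ᵥ u j + t * (y ⬝ᵥ u j) := fun t j => by
    rw [add_dotProduct, smul_dotProduct, smul_eq_mul]
  set t := (h ⬝ᵥ u k' - 1) / -(y ⬝ᵥ u k')
  have ht : 0 ≤ t := div_nonneg (sub_nonneg.mpr (hh k')) (neg_nonneg.mpr hk'.le)
  refine ⟨t, fun j => ?_, k', hk', ?_⟩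
  · rw [hray]
    rcases lt_or_ge (y ⬝ᵥ u j) 0 with hj | hj
    · have := (le_div_iff₀ (neg_pos.mpr hj)).mp (hmin j hj)
      linarith
    · nlinarith [hh j]
  · rw [hray]
    simp only [t]
    field_simp [hk'.ne]
    ring

variable [DecidableEq n]

theorem exists_feasible_tight_ssubset (u : ι → n → 𝕜) {h : n → 𝕜} (hh : ∀ j, 1 ≤ h ⬝ᵥ u j)
    {k : ι} (hk : u k ∉ span 𝕜 (u '' {j | h ⬝ᵥ u j = 1})) :
    ∃ h' : n → 𝕜, (∀ j, 1 ≤ h' ⬝ᵥ u j) ∧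
      {j | h ⬝ᵥ u j = 1} ⊂ {j | h' ⬝ᵥ u j = 1} := by
  obtain ⟨f, hfk, hfT⟩ := exists_dual_map_eq_bot_of_notMem hk inferInstance
  -- the factor `-(f (u k))` makes `y ⬝ᵥ u k = -(f (u k)) ^ 2 < 0`
  set y := -(f (u k)) • (dotProductEquiv 𝕜 n).symm f
  have hy : ∀ x, y ⬝ᵥ x = -(f (u k)) * f x := fun x => by
    rw [smul_dotProduct, smul_eq_mul, ← dotProductEquiv_apply_apply, LinearEquiv.apply_symm_apply]
  have hyT : ∀ j, h ⬝ᵥ u j = 1 → y ⬝ᵥ u j = 0 := fun j hj => by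
    have : f (u j) ∈ (span 𝕜 (u '' {j | h ⬝ᵥ u j = 1})).map f :=
      mem_map_of_mem (subset_span ⟨j, hj, rfl⟩)
    rw [hfT, mem_bot] at this
    rw [hy, this, mul_zero]
  obtain ⟨t, ht, k', hk', htk'⟩ := exists_feasible_tight_on_ray u hh (k := k)
    (by rw [hy]; nlinarith [sq_pos_of_ne_zero hfk])
  refine ⟨h + t • y, ht, Set.ssubset_iff_of_subset (fun j hj => ?_) |>.mpr ⟨k', htk', ?_⟩⟩
  · simp only [Set.mem_ofPred_eq, add_dotProduct, smul_dotProduct, hyT j hj] at hj ⊢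
    simpa using hj
  · exact fun hk'T => hk'.ne (hyT k' hk'T)

theorem exists_feasible_tight_span (u : ι → n → 𝕜) (hfeas : ∃ h : n → 𝕜, ∀ j, 1 ≤ h ⬝ᵥ u j) :
    ∃ h : n → 𝕜, (∀ j, 1 ≤ h ⬝ᵥ u j) ∧ ∀ j, u j ∈ span 𝕜 (u '' {j | h ⬝ᵥ u j = 1}) := by
  by_contra! hno
  have hgrow : ∀ N : ℕ, ∃ h : n → 𝕜, (∀ j, 1 ≤ h ⬝ᵥ u j) ∧ N ≤ #{j | h ⬝ᵥ u j = 1} := by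
    intro N
    induction N with
    | zero => exact (hfeas.imp fun h hh => ⟨hh, Nat.zero_le _⟩)
    | succ N ih =>
      obtain ⟨h, hh, hN⟩ := ih
      obtain ⟨k, hk⟩ := hno h hh
      obtain ⟨h', hh', hss⟩ := exists_feasible_tight_ssubset u hh hk
      refine ⟨h', hh', hN.trans_lt (card_lt_card ?_)⟩
      simpa [← coe_ssubset] using hss
  obtain ⟨h, -, hN⟩ := hgrow (Fintype.card ι + 1)
  exact absurd (hN.trans (card_le_univ _)) (by omega)

end Feasible

theorem exists_int_proportional_of_affineIndependent {σ : Type*} [Fintype σ] [DecidableEq σ]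
    {d a : ℕ} (ha : 1 ≤ a) (hd : 1 ≤ d) (u : Matrix σ (Fin d) ℤ) (hu : ∀ s i, |u s i| ≤ a)
    (hind : AffineIndependent ℝ fun s i => (u s i : ℝ)) {w : σ → ℝ} (hw0 : ∀ s, 0 < w s)
    (hw1 : ∑ s, w s = 1) (hwu : ∑ s, w s • (fun i => (u s i : ℝ)) = 0) :
    ∃ c : ℝ, 0 < c ∧ ∃ ν : σ → ℤ, (∀ s, (ν s : ℝ) = c * w s) ∧
      ∀ s, ν s ≤ (((a * d) ^ (d + 1) : ℕ) : ℤ) := by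
  obtain ⟨s₀⟩ : Nonempty σ := by
    by_contra h
    simp [not_nonempty_iff.mp h] at hw1
  have hli := hind.linearIndependent_subtype_ne hw1 hwu (hw0 s₀).ne'
  have hκ : Fintype.card {s // s ≠ s₀} ≤ d := by simpa using hli.fintype_card_le_finrank
  have hx : (Matrix.of fun i (c : {s // s ≠ s₀}) => u c i).map (Int.cast : ℤ → ℝ) *ᵥ
      (fun c => w c / w s₀) = fun i => ((-u s₀ i : ℤ) : ℝ) := by
    funext i
    simpa [mulVec, dotProduct, mul_comm] using
      congrFun (sum_subtype_ne_div_smul_eq_neg hwu (hw0 s₀).ne') i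
  obtain ⟨D, N, hD, hDC, hN, hNb⟩ := exists_mulVec_eq_smul ℝ _ hli (a := a)
    (by exact_mod_cast ha) (fun i c => hu _ _) (fun i => (abs_neg _).trans_le (hu s₀ i)) hx
  refine ⟨D / w s₀, div_pos (by exact_mod_cast hD) (hw0 s₀),
    fun s => if h : s = s₀ then D else N ⟨s, h⟩, fun s => ?_, fun s => ?_⟩
  · by_cases h : s = s₀
    · subst h
      simp [(hw0 _).ne']
    · simp only [dif_neg h, hN]
      ring
  · by_cases h : s = s₀
    · simp only [dif_pos h]
      exact hDC.trans (by exact_mod_cast Nat.factorial_mul_pow_le_pow_succ hκ ha hd)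
    · simp only [dif_neg h]
      exact (le_abs_self _).trans
        ((hNb _).trans (by exact_mod_cast Nat.mul_factorial_mul_pow_mul_le hκ ha))

theorem exists_nat_dependency_of_affineIndependent {σ : Type*} [Fintype σ] [DecidableEq σ]
    {d a : ℕ} (ha : 1 ≤ a) (hd : 1 ≤ d) (u : Matrix σ (Fin d) ℤ) (hu : ∀ s i, |u s i| ≤ a)
    (hind : AffineIndependent ℝ fun s i => (u s i : ℝ)) {w : σ → ℝ} (hw0 : ∀ s, 0 < w s)
    (hw1 : ∑ s, w s = 1) (hwu : ∑ s, w s • (fun i => (u s i : ℝ)) = 0) :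
    ∃ ν : σ → ℕ, (∀ s, ν s ≤ (a * d) ^ (d + 1)) ∧ ν ≠ 0 ∧
      ∀ i, ((fun s => (ν s : ℤ)) ᵥ* u) i = 0 := by
  obtain ⟨c, hc, ν, hν, hνK⟩ :=
    exists_int_proportional_of_affineIndependent ha hd u hu hind hw0 hw1 hwu
  obtain ⟨s₀⟩ : Nonempty σ := by
    by_contra h
    simp [not_nonempty_iff.mp h] at hw1
  have hνpos : ∀ s, 0 < ν s := fun s => by
    have : (0 : ℝ) < ν s := hν s ▸ mul_pos hc (hw0 s)
    exact_mod_cast this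
  have hνu : ν ᵥ* u = 0 := by
    funext i
    have : (((ν ᵥ* u) i : ℤ) : ℝ) = c * (∑ s, w s • fun i => (u s i : ℝ)) i := by
      simp [vecMul, dotProduct, hν, Finset.mul_sum, mul_assoc]
    rw [hwu] at this
    exact_mod_cast this.trans (mul_zero _)
  refine ⟨fun s => (ν s).toNat, fun s => Int.toNat_le.mpr (hνK s), fun h => ?_, fun i => ?_⟩
  · exact (hνpos s₀).not_ge (by simpa using congrFun h s₀)
  · simp only [Int.toNat_of_nonneg (hνpos _).le, hνu, Pi.zero_apply]

theorem exists_nat_dependency_of_zero_mem_convexHull {ι : Type*} [Fintype ι] {d a : ℕ}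
    (ha : 1 ≤ a) (hd : 1 ≤ d) (v : Matrix ι (Fin d) ℤ) (hv : ∀ j i, |v j i| ≤ a)
    (h0 : (0 : Fin d → ℝ) ∈ convexHull ℝ (Set.range fun j i => (v j i : ℝ))) :
    ∃ n : ι → ℕ, (∀ j, n j ≤ (a * d) ^ (d + 1)) ∧ n ≠ 0 ∧
      ∀ i, ((fun j => (n j : ℤ)) ᵥ* v) i = 0 := by
  classical
  obtain ⟨σ, _, z, w, hzv, hz, hw0, hw1, hwz⟩ := eq_pos_convex_span_of_mem_convexHull h0
  choose p hp using fun s => hzv ⟨s, rfl⟩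
  have hpz : (fun s i => (v (p s) i : ℝ)) = z := funext hp
  subst hpz
  have hp_inj : Injective p := hz.injective.of_comp (f := fun j i => (v j i : ℝ))
  obtain ⟨ν, hνK, hν0, hνv⟩ := exists_nat_dependency_of_affineIndependent ha hd
    (fun s => v (p s)) (fun s i => hv _ _) hz hw0 hw1 hwz
  refine ⟨extend p ν 0, fun j => ?_, fun h => hν0 ?_, fun i => ?_⟩
  · by_cases hj : ∃ s, p s = j
    · obtain ⟨s, rfl⟩ := hj
      rw [hp_inj.extend_apply]
      exact hνK s
    · rw [extend_apply' _ _ _ hj]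
      exact Nat.zero_le _
  · funext s
    simpa [hp_inj.extend_apply] using congrFun h (p s)
  · have hcast : (fun j => ((extend p ν 0 j : ℕ) : ℤ)) = extend p (fun s => (ν s : ℤ)) 0 :=
      funext fun j => by rw [apply_extend (Nat.cast : ℕ → ℤ)]; rfl
    rw [hcast, vecMul_extend_zero hp_inj]
    exact hνv i

theorem exists_int_feasible_of_real_feasible {ι : Type*} [Fintype ι] {d a : ℕ} (ha : 1 ≤ a)
    (v : Matrix ι (Fin d) ℤ) (hv : ∀ j i, |v j i| ≤ a)
    (hfeas : ∃ h : Fin d → ℝ, ∀ j, 1 ≤ h ⬝ᵥ fun i => (v j i : ℝ)) :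
    ∃ g : Fin d → ℤ, (∀ i, |g i| ≤ (((a * d) ^ (d + 1) : ℕ) : ℤ)) ∧ ∀ j, 1 ≤ g ⬝ᵥ v j := by
  classical
  set rv : ι → Fin d → ℝ := fun j i => v j i
  obtain ⟨h, hh, hspan⟩ := exists_feasible_tight_span rv hfeas
  obtain ⟨κ, b, hb, hbspan, hbli⟩ :=
    exists_linearIndependent' ℝ fun t : {j | h ⬝ᵥ rv j = 1} => rv t
  have : Fintype κ := Fintype.ofInjective b hb
  obtain ⟨D, g, hD, hgU, hg⟩ := exists_vecMul_eq_const ℝ (Matrix.of fun i c => v (b c) i) hbli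
    (a := a) (by exact_mod_cast ha) fun i c => hv _ _
  have hκ : Fintype.card κ ≤ d := by simpa using hbli.fintype_card_le_finrank
  refine ⟨g, fun i => (hg i).trans ?_, fun j => ?_⟩
  · exact_mod_cast (Nat.mul_le_mul_left _ (Nat.le_mul_of_pos_right _ ha)).trans
      (Nat.mul_factorial_mul_pow_mul_le hκ ha)
  -- `g` and `D • h` agree on the tight vectors, which span every `v j`.
  have hker : span ℝ (rv '' {j | h ⬝ᵥ rv j = 1}) ≤
      LinearMap.ker (dotProductEquiv ℝ _ ((Int.cast ∘ g) - (D : ℝ) • h)) := by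
    rw [Set.image_eq_range, ← hbspan, span_le]
    rintro _ ⟨c, rfl⟩
    have hgc : (Int.cast ∘ g) ⬝ᵥ rv (b c) = (D : ℝ) := by
      rw [← congrFun hgU c]; simp [dotProduct, rv, vecMul]
    have hhc : h ⬝ᵥ rv (b c) = 1 := (b c).2
    simp only [SetLike.mem_coe, LinearMap.mem_ker, dotProductEquiv_apply_apply, sub_dotProduct,
      smul_dotProduct, Function.comp_apply, hgc, hhc, smul_eq_mul, mul_one, sub_self]
  have hj := hker (hspan j)
  simp only [LinearMap.mem_ker, dotProductEquiv_apply_apply, sub_dotProduct, smul_dotProduct,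
    smul_eq_mul, sub_eq_zero] at hj
  have : (1 : ℝ) ≤ ((g ⬝ᵥ v j : ℤ) : ℝ) := by
    rw [show ((g ⬝ᵥ v j : ℤ) : ℝ) = (Int.cast ∘ g) ⬝ᵥ rv j by simp [dotProduct, rv]]
    exact hj ▸ one_le_mul_of_one_le_of_one_le (by exact_mod_cast hD) (hh j)
  exact_mod_cast this

theorem eq_zero_of_vecMul_eq_zero_of_one_le_dotProduct {ι n : Type*} [Fintype ι] [Fintype n]
    {v : Matrix ι n ℤ} {m : ι → ℕ} (hmv : ∀ i, ((fun j => (m j : ℤ)) ᵥ* v) i = 0) {h : n → ℤ}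
    (hh : ∀ j, 1 ≤ h ⬝ᵥ v j) : m = 0 := by
  have hzero : (fun j => (m j : ℤ)) ⬝ᵥ (v *ᵥ h) = 0 := by
    rw [dotProduct_mulVec, funext hmv]; exact zero_dotProduct h
  funext j₀
  have : (m j₀ : ℤ) ≤ (fun j => (m j : ℤ)) ⬝ᵥ (v *ᵥ h) :=
    calc (m j₀ : ℤ) ≤ ∑ j, (m j : ℤ) :=
          single_le_sum (f := fun j => (m j : ℤ)) (fun _ _ => Nat.cast_nonneg _) (mem_univ j₀)
      _ ≤ ∑ j, (m j : ℤ) * (v *ᵥ h) j := sum_le_sum fun j _ =>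
          le_mul_of_one_le_right (Nat.cast_nonneg _) (by
            show 1 ≤ v j ⬝ᵥ h; rw [dotProduct_comm]; exact hh j)
  simp only [Pi.zero_apply]
  omega

theorem stmt3_general (a d l : ℕ) (ha : 0 < a) (hd : 0 < d)
    (v : Fin l → Fin d → ℤ) (hv : ∀ j i, |v j i| ≤ (a : ℤ))
    (K : ℕ) (hK : K = (a * d) ^ (d + 1)) :
    Xor'
      (∃ n : Fin l → ℕ, (∀ j, n j ≤ K) ∧ n ≠ 0 ∧
        ∀ i, ∑ j, (n j : ℤ) * v j i = 0)
      (∃ h : Fin d → ℤ, (∀ i, |h i| ≤ (K : ℤ)) ∧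
        ∀ j, 1 ≤ ∑ i, h i * v j i) := by
  subst hK
  refine (xor_iff_or_and_not_and _ _).mpr ⟨?_, fun ⟨⟨n, _, hn0, hnv⟩, ⟨h, _, hh⟩⟩ =>
    hn0 (eq_zero_of_vecMul_eq_zero_of_one_le_dotProduct hnv hh)⟩
  by_cases h0 : (0 : Fin d → ℝ) ∈ convexHull ℝ (Set.range fun j i => (v j i : ℝ))
  · exact Or.inl (exists_nat_dependency_of_zero_mem_convexHull ha hd v hv h0)
  · exact Or.inr (exists_int_feasible_of_real_feasible ha v hv
      (exists_one_le_dotProduct_of_zero_notMem_convexHull _ h0))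

/-- discrete Farkas lemma of Papadimitriou. For positive
integers `a, d, l`, vectors `v_1, …, v_l ∈ ℤ^d` with all components of absolute
value at most `a`, and `K = (ad)^(d+1)`, exactly one of the following holds:
(1) some nontrivial combination `∑ n_j v_j = 0` with coefficients
`n_j ∈ {0,…,K}`; (2) some `h ∈ ℤ^d` with components of absolute value at most
`K` satisfies `h · v_j ≥ 1` for all `j`. -/
theorem stmt3 (a d l : ℕ) (ha : 0 < a) (hd : 0 < d) (hl : 0 < l)
    (v : Fin l → Fin d → ℤ) (hv : ∀ j i, |v j i| ≤ (a : ℤ))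
    (K : ℕ) (hK : K = (a * d) ^ (d + 1)) :
    Xor'
      (∃ n : Fin l → ℕ, (∀ j, n j ≤ K) ∧ n ≠ 0 ∧
        ∀ i, ∑ j, (n j : ℤ) * v j i = 0)
      (∃ h : Fin d → ℤ, (∀ i, |h i| ≤ (K : ℤ)) ∧
        ∀ j, 1 ≤ ∑ i, h i * v j i) :=
  stmt3_general a d l ha hd v hv K hK
end

section
/- Let d, n, a be positive integers and let M be a d×n integer matrix all of whose entries have absolute value at most a. Suppose c in ℕ^n satisfies M c = 0 and \|c\|_1 >= 2 n (ad)^{2d+3}. Then there exist nonzero vectors c_1, c_2 in ℕ^n such that c_1 + c_2 = c, M c_1 = 0, and M c_2 = 0. -/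
/-!
Over `ℚ`, the support of every nonzero nonnegative kernel vector of `M` contains the support of an
*elementary* one: a nonnegative kernel vector `x` such that every kernel vector supported in
`supp x` is a multiple of `x`. The columns of `M` on `supp x` then have rank `t - 1`, where
`t = #supp x ≤ d + 1`, and Siegel's lemma applied to `t - 1` independent rows gives a nonzero
integer multiple `q` of `x` with entries at most `(t a) ^ (t - 1)`, so `‖q‖₁ ≤ 2 (ad)^(2d+3)`.
Subtracting from `c` the largest multiple `r q` that keeps it nonnegative kills a coordinate, so
repeating this exhausts `c` in at most `n` steps, and `‖c‖₁ ≥ 2 n (ad)^(2d+3)` forces `r ≥ 1` at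
some step. Then `q ≤ c`, and `q ≠ c` because the entries of `q` are at most `(ad)^(2d+3)`.
-/

open Function Finset Matrix

attribute [local instance] Matrix.seminormedAddCommGroup

section Elementary

variable {K ι : Type*} [Field K]

-- Equivalently (Rockafellar): `x` is a nonzero vector of `W` of minimal support.
def IsElementary (W : Submodule K (ι → K)) (x : ι → K) : Prop :=
  x ∈ W ∧ x ≠ 0 ∧ ∀ z ∈ W, support z ⊆ support x → z ∈ K ∙ x

theorem IsElementary.exists_ne_zero_smul_eq {W : Submodule K (ι → K)} {x z : ι → K}
    (hx : IsElementary W x) (hzW : z ∈ W) (hz : z ≠ 0) (hzx : support z ⊆ support x) :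
    ∃ μ : K, μ ≠ 0 ∧ μ • x = z := by
  obtain ⟨μ, rfl⟩ := Submodule.mem_span_singleton.1 (hx.2.2 z hzW hzx)
  exact ⟨μ, by rintro rfl; simp at hz, rfl⟩

theorem support_extend_val_zero_subset {M : Type*} [Zero M] {s : Set ι} (z : s → M) :
    support (extend (↑) z 0) ⊆ s :=
  support_extend_zero_subset.trans ((Set.image_subset_range _ _).trans Subtype.range_coe.subset)

variable [Fintype ι]

theorem Matrix.mulVec_eq_submatrix_mulVec_comp {R α : Type*} [CommSemiring R] [Fintype α]
    (A : Matrix α ι R) {s : Set ι} [Fintype s] {w : ι → R} (hw : support w ⊆ s) :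
    A *ᵥ w = A.submatrix id ((↑) : s → ι) *ᵥ (w ∘ (↑)) := by
  classical
  ext i
  simp only [mulVec, dotProduct, submatrix_apply, id, Function.comp_apply]
  rw [Finset.sum_set_coe (f := fun j => A i j * w j)]
  refine (Finset.sum_subset (Finset.subset_univ _) fun j _ hj => ?_).symm
  rw [notMem_support.1 fun h => hj (Set.mem_toFinset.2 (hw h)), mul_zero]

theorem IsElementary.rank_submatrix_support_add_one {α : Type*} [Fintype α] {A : Matrix α ι K}
    {x : ι → K} (hx : IsElementary (LinearMap.ker A.mulVecLin) x) [Fintype (support x)] :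
    (A.submatrix id ((↑) : support x → ι)).rank + 1 = Fintype.card (support x) := by
  set xs : support x → K := x ∘ (↑)
  have hxs : xs ≠ 0 := fun h => by
    obtain ⟨j, hj⟩ := support_nonempty_iff.2 hx.2.1
    exact hj (congrFun h ⟨j, hj⟩)
  have hker : LinearMap.ker (A.submatrix id ((↑) : support x → ι)).mulVecLin = K ∙ xs := by
    ext z
    rw [LinearMap.mem_ker, Submodule.mem_span_singleton, mulVecLin_apply]
    constructor
    · intro hz
      set z' : ι → K := extend (↑) z 0
      have hz'x : support z' ⊆ support x := support_extend_val_zero_subset z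
      have hz'z : z' ∘ (↑) = z := funext (Subtype.val_injective.extend_apply z 0)
      have hz'W : z' ∈ LinearMap.ker A.mulVecLin := by
        rw [LinearMap.mem_ker, mulVecLin_apply, A.mulVec_eq_submatrix_mulVec_comp hz'x, hz'z, hz]
      obtain ⟨μ, hμ⟩ := Submodule.mem_span_singleton.1 (hx.2.2 _ hz'W hz'x)
      exact ⟨μ, by rw [← hz'z, ← hμ]; rfl⟩
    · rintro ⟨μ, rfl⟩
      rw [mulVec_smul, ← A.mulVec_eq_submatrix_mulVec_comp subset_rfl,
        ← mulVecLin_apply, LinearMap.mem_ker.1 hx.1, smul_zero]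
  have := LinearMap.finrank_range_add_finrank_ker (A.submatrix id ((↑) : support x → ι)).mulVecLin
  rwa [hker, finrank_span_singleton hxs, Module.finrank_fintype_fun_eq_card] at this

theorem IsElementary.ncard_support_le_card_add_one {α : Type*} [Fintype α] {A : Matrix α ι K}
    {x : ι → K} (hx : IsElementary (LinearMap.ker A.mulVecLin) x) :
    (support x).ncard ≤ Fintype.card α + 1 := by
  classical
  rw [← Nat.card_coe_set_eq, Nat.card_eq_fintype_card, ← hx.rank_submatrix_support_add_one]
  exact Nat.add_le_add_right (rank_le_card_height _) 1

end Elementary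

section OrderedField

variable {K ι : Type*} [Field K] [LinearOrder K] [IsStrictOrderedRing K] [Fintype ι]

theorem exists_pos_nonneg_sub_smul_support_ssubset {y w : ι → K} (hy : 0 ≤ y)
    (hw : ∃ j, 0 < w j) (hwy : support w ⊆ support y) :
    ∃ s : K, 0 < s ∧ 0 ≤ y - s • w ∧ support (y - s • w) ⊂ support y := by
  classical
  obtain ⟨j₀, hj₀, hmin⟩ :=
    exists_min_image {j | 0 < w j} (fun j => y j / w j) (by simpa [Finset.Nonempty] using hw)
  replace hj₀ : 0 < w j₀ := by simpa using hj₀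
  have hyj₀ : 0 < y j₀ := (hy j₀).lt_of_ne' (hwy hj₀.ne')
  refine ⟨y j₀ / w j₀, div_pos hyj₀ hj₀, fun j => ?_, ?_⟩
  · have hyj : 0 ≤ y j := hy j
    simp only [Pi.zero_apply, Pi.sub_apply, Pi.smul_apply, smul_eq_mul, sub_nonneg]
    rcases lt_or_ge 0 (w j) with hwj | hwj
    · exact (le_div_iff₀ hwj).1 (hmin j (by simpa using hwj))
    · exact (mul_nonpos_of_nonneg_of_nonpos (div_pos hyj₀ hj₀).le hwj).trans hyj
  · refine (Set.ssubset_iff_of_subset ?_).2 ⟨j₀, hyj₀.ne', ?_⟩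
    · exact (support_sub _ _).trans (Set.union_subset subset_rfl
        ((support_const_smul_subset _ _).trans hwy))
    · simp [hj₀.ne']

theorem exists_isElementary_nonneg_support_subset {W : Submodule K (ι → K)} {y : ι → K}
    (hyW : y ∈ W) (hy : 0 ≤ y) (hy0 : y ≠ 0) :
    ∃ x, IsElementary W x ∧ 0 ≤ x ∧ support x ⊆ support y := by
  induction h : (support y).ncard using Nat.strong_induction_on generalizing y with
  | _ N ih =>
  by_cases hel : ∀ z ∈ W, support z ⊆ support y → z ∈ K ∙ y
  · exact ⟨y, ⟨hyW, hy0, hel⟩, hy, subset_rfl⟩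
  push Not at hel
  obtain ⟨z, hzW, hzy, hz⟩ := hel
  obtain ⟨j₁, hj₁⟩ : ∃ j, y j ≠ 0 := Function.ne_iff.mp hy0
  set w := z - (z j₁ / y j₁) • y
  have hwW : w ∈ W := sub_mem hzW (W.smul_mem _ hyW)
  have hw0 : w ≠ 0 := fun h =>
    hz (Submodule.mem_span_singleton.2 ⟨z j₁ / y j₁, (sub_eq_zero.1 h).symm⟩)
  have hwj₁ : w j₁ = 0 := by simp [w, hj₁]
  have hwy : support w ⊆ support y := (support_sub _ _).trans
    (Set.union_subset hzy (support_const_smul_subset _ _))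
  obtain ⟨v, hvW, hvpos, hvy, hvj₁⟩ :
      ∃ v ∈ W, (∃ j, 0 < v j) ∧ support v ⊆ support y ∧ v j₁ = 0 := by
    obtain ⟨j, hj⟩ := Function.ne_iff.mp hw0
    rcases hj.lt_or_gt with hneg | hpos
    · exact ⟨-w, W.neg_mem hwW, ⟨j, by simpa using hneg⟩, by rwa [support_neg], by simp [hwj₁]⟩
    · exact ⟨w, hwW, ⟨j, hpos⟩, hwy, hwj₁⟩
  obtain ⟨s, -, hnn, hss⟩ := exists_pos_nonneg_sub_smul_support_ssubset hy hvpos hvy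
  have hy' : y - s • v ≠ 0 := Function.ne_iff.mpr ⟨j₁, by simp [hvj₁, hj₁]⟩
  obtain ⟨x, hx, hx0, hxy⟩ := ih _ (h ▸ Set.ncard_lt_ncard hss)
    (W.sub_mem hyW (W.smul_mem _ hvW)) hnn hy' rfl
  exact ⟨x, hx, hx0, hxy.trans hss.subset⟩

theorem exists_smul_le_sum_le_ncard_mul {W : Submodule K (ι → K)} {P : (ι → K) → Prop} {C : K}
    (hP : ∀ y ∈ W, 0 ≤ y → y ≠ 0 →
      ∃ q ∈ W, 0 ≤ q ∧ q ≠ 0 ∧ support q ⊆ support y ∧ ∑ j, q j ≤ C ∧ P q)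
    {y : ι → K} (hyW : y ∈ W) (hy : 0 ≤ y) (hy0 : y ≠ 0) :
    ∃ q ∈ W, q ≠ 0 ∧ P q ∧
      ∃ r : K, 0 < r ∧ r • q ≤ y ∧ ∑ j, y j ≤ (support y).ncard * C * r := by
  induction h : (support y).ncard using Nat.strong_induction_on generalizing y with
  | _ N ih =>
  obtain ⟨q, hqW, hq, hq0, hqy, hqC, hPq⟩ := hP y hyW hy hy0
  have hqpos : ∃ j, 0 < q j := by
    obtain ⟨j, hj⟩ : ∃ j, q j ≠ 0 := Function.ne_iff.mp hq0
    exact ⟨j, (hq j).lt_of_ne' hj⟩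
  have hC : 0 ≤ C := (sum_nonneg fun j _ => hq j).trans hqC
  have hN : 1 ≤ (N : K) := by
    rw [← h]
    exact_mod_cast (Set.ncard_pos (Set.toFinite _)).2 (support_nonempty_iff.2 hy0)
  obtain ⟨s, hs, hnn, hss⟩ := exists_pos_nonneg_sub_smul_support_ssubset hy hqpos hqy
  by_cases hdone : ∑ j, y j ≤ N * C * s
  · exact ⟨q, hqW, hq0, hPq, s, hs, sub_nonneg.1 hnn, hdone⟩
  push Not at hdone
  have hsum : ∑ j, y j ≤ ∑ j, (y - s • q) j + s * C := by
    have : ∑ j, (y - s • q) j = ∑ j, y j - s * ∑ j, q j := by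
      simp [sum_sub_distrib, mul_sum]
    nlinarith
  have hy' : y - s • q ≠ 0 := by
    rintro h0
    simp only [h0, Pi.zero_apply, sum_const_zero, zero_add] at hsum
    nlinarith [mul_nonneg hC hs.le]
  obtain ⟨q', hq'W, hq'0, hPq', r, hr, hrq', hy'sum⟩ := ih _ (h ▸ Set.ncard_lt_ncard hss)
    (W.sub_mem hyW (W.smul_mem _ hqW)) hnn hy' rfl
  refine ⟨q', hq'W, hq'0, hPq', r, hr, hrq'.trans (sub_le_self _ (smul_nonneg hs.le hq)), ?_⟩
  have hN' : ((support (y - s • q)).ncard : K) + 1 ≤ N := by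
    rw [← h]; exact_mod_cast Set.ncard_lt_ncard hss
  rcases le_or_gt (C * s) (C * r) with hsr | hsr
  · nlinarith [mul_nonneg hC hs.le]
  · nlinarith [mul_nonneg hC hs.le]

end OrderedField

theorem Int.Matrix.exists_ne_zero_int_vec_norm_le_of_rank_lt {α β : Type*} [Fintype α]
    [Fintype β] (N : Matrix α β ℤ) (hpos : 0 < (N.map ((↑) : ℤ → ℚ)).rank)
    (hlt : (N.map ((↑) : ℤ → ℚ)).rank < Fintype.card β) :
    ∃ y : β → ℤ, y ≠ 0 ∧ N *ᵥ y = 0 ∧ ‖y‖ ≤ (Fintype.card β * max 1 ‖N‖) ^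
      (((N.map ((↑) : ℤ → ℚ)).rank : ℝ) / (Fintype.card β - (N.map ((↑) : ℤ → ℚ)).rank)) := by
  set Nq := N.map ((↑) : ℤ → ℚ)
  obtain ⟨κ, e, he, hspan, hli⟩ := exists_linearIndependent' ℚ Nq.row
  have : Finite κ := Finite.of_injective e he
  let _ := Fintype.ofFinite κ
  have hcard : Fintype.card κ = Nq.rank := by
    rw [rank_eq_finrank_span_row, ← hspan, finrank_span_eq_card hli]
  obtain ⟨y, hy0, hAy, hy⟩ :=
    exists_ne_zero_int_vec_norm_le (N.submatrix e id) (hcard ▸ hlt) (hcard ▸ hpos)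
  refine ⟨y, hy0, ?_, ?_⟩
  · have hrows : ∀ v ∈ Submodule.span ℚ (Set.range Nq.row),
        v ⬝ᵥ (fun j => (y j : ℚ)) = 0 := by
      rw [← hspan]
      intro v hv
      induction hv using Submodule.span_induction with
      | mem v hv =>
        obtain ⟨k, rfl⟩ := hv
        have := congrFun hAy k
        simp only [mulVec, dotProduct, submatrix_apply, id, Pi.zero_apply] at this
        change ∑ j, (N (e k) j : ℚ) * y j = 0
        exact_mod_cast this
      | zero => exact zero_dotProduct _
      | add v w _ _ hv hw => rw [add_dotProduct, hv, hw, add_zero]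
      | smul c v _ hv => rw [smul_dotProduct, hv, smul_zero]
    ext i
    have := hrows (Nq i) (Submodule.subset_span ⟨i, rfl⟩)
    simp only [dotProduct, Nq, map_apply] at this
    simp only [mulVec, dotProduct, Pi.zero_apply]
    exact_mod_cast this
  · rw [← hcard]
    have hlt' : (Fintype.card κ : ℝ) ≤ Fintype.card β := by exact_mod_cast (hcard ▸ hlt).le
    refine hy.trans (Real.rpow_le_rpow (by positivity) ?_
      (div_nonneg (Nat.cast_nonneg _) (sub_nonneg.2 hlt')))
    gcongr
    exact (norm_le_iff (norm_nonneg _)).2 fun i j => norm_entry_le_entrywise_sup_norm N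

theorem Int.Matrix.exists_ne_zero_int_vec_abs_le_of_rank_add_one {α β : Type*} [Fintype α]
    [Fintype β] (N : Matrix α β ℤ) {a : ℕ} (hN : ∀ i j, |N i j| ≤ a) (ha : 1 ≤ a)
    (hrank : (N.map ((↑) : ℤ → ℚ)).rank + 1 = Fintype.card β) (hβ : 2 ≤ Fintype.card β) :
    ∃ y : β → ℤ, y ≠ 0 ∧ N *ᵥ y = 0 ∧
      ∀ k, |y k| ≤ (Fintype.card β * a) ^ (Fintype.card β - 1) := by
  set t := Fintype.card β
  obtain ⟨y, hy0, hNy, hy⟩ := exists_ne_zero_int_vec_norm_le_of_rank_lt N (by omega) (by omega)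
  refine ⟨y, hy0, hNy, fun k => ?_⟩
  have hNa : max 1 ‖N‖ ≤ a := by
    refine max_le (by exact_mod_cast ha) ((norm_le_iff (by positivity)).2 fun i j => ?_)
    rw [Int.norm_eq_abs]
    exact_mod_cast hN i j
  have hexp : ((N.map ((↑) : ℤ → ℚ)).rank : ℝ) / (t - (N.map ((↑) : ℤ → ℚ)).rank) =
      (t - 1 : ℕ) := by
    rw [show (N.map ((↑) : ℤ → ℚ)).rank = t - 1 by omega, Nat.cast_sub (by omega)]
    simp
  rw [hexp, Real.rpow_natCast] at hy
  have : ‖y k‖ ≤ ((t : ℝ) * a) ^ (t - 1) := (norm_le_pi_norm y k).trans (hy.trans (by gcongr))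
  rw [Int.norm_eq_abs] at this
  exact_mod_cast this

theorem Set.exists_subset_pair_of_ncard_le_two {α : Type*} [Finite α] {s : Set α} {a : α}
    (ha : a ∈ s) (hs : s.ncard ≤ 2) : ∃ b, s ⊆ {a, b} := by
  have : Nonempty α := ⟨a⟩
  have := Set.ncard_sdiff_singleton_add_one ha
  obtain ⟨b, hb⟩ := (Set.ncard_le_one_iff_subset_singleton (s := s \ {a})).1 (by omega)
  exact ⟨b, by rwa [Set.sdiff_subset_iff, Set.singleton_union] at hb⟩

theorem mul_mul_pow_sub_one_le_mul_pow {a d t : ℕ} (ha : 1 ≤ a) (ht : 3 ≤ t) (htd : t ≤ d + 1) :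
    t * (t * a) ^ (t - 1) ≤ (a * d) ^ (2 * d + 3) := by
  have hd : 2 ≤ d := by omega
  calc t * (t * a) ^ (t - 1) ≤ (d + 1) * ((d + 1) * a) ^ d := by
        gcongr
        · nlinarith
        · omega
    _ = (d + 1) ^ (d + 1) * a ^ d := by rw [mul_pow, pow_succ]; ring
    _ ≤ (d ^ 2) ^ (d + 1) * a ^ (2 * d + 3) := by
        gcongr
        · nlinarith
        · omega
    _ ≤ d ^ (2 * d + 3) * a ^ (2 * d + 3) := by
        rw [← pow_mul]
        gcongr
        · omega
        · omega
    _ = (a * d) ^ (2 * d + 3) := by ring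

theorem le_mul_pow_two_mul_add_three {a d : ℕ} (hd : 1 ≤ d) : a ≤ (a * d) ^ (2 * d + 3) := by
  rcases Nat.eq_zero_or_pos a with rfl | ha
  · simp
  calc a ≤ a * d := Nat.le_mul_of_pos_right a hd
    _ ≤ (a * d) ^ (2 * d + 3) := Nat.le_self_pow (by omega) _

section IntegerVectors

variable {ι : Type*} [Fintype ι]

theorem mem_ker_map_intCast_iff {α : Type*} [Fintype α] {M : Matrix α ι ℤ} {v : ι → ℕ} :
    (fun j => (v j : ℚ)) ∈ LinearMap.ker (M.map ((↑) : ℤ → ℚ)).mulVecLin ↔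
      ∀ i, ∑ j, M i j * (v j : ℤ) = 0 := by
  refine funext_iff.trans (forall_congr' fun i => ?_)
  change ∑ j, (M i j : ℚ) * v j = 0 ↔ _
  exact_mod_cast Iff.rfl

theorem IsElementary.exists_int_eq_smul_abs_le_of_two_le {α : Type*} [Fintype α]
    {M : Matrix α ι ℤ} {a : ℕ} (hM : ∀ i j, |M i j| ≤ a) (ha : 1 ≤ a) {x : ι → ℚ}
    (hx : IsElementary (LinearMap.ker (M.map ((↑) : ℤ → ℚ)).mulVecLin) x)
    (ht : 2 ≤ (support x).ncard) :
    ∃ q : ι → ℤ, ∃ μ : ℚ, μ ≠ 0 ∧ (fun j => (q j : ℚ)) = μ • x ∧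
      ∀ j, |q j| ≤ ((support x).ncard * a) ^ ((support x).ncard - 1) := by
  classical
  have htcard : Fintype.card (support x) = (support x).ncard := by
    rw [← Nat.card_coe_set_eq, Nat.card_eq_fintype_card]
  have hrank : ((M.submatrix id ((↑) : support x → ι)).map ((↑) : ℤ → ℚ)).rank + 1 =
      Fintype.card (support x) := by
    rw [← submatrix_map]
    exact hx.rank_submatrix_support_add_one
  obtain ⟨y, hy0, hNy, hy⟩ := Int.Matrix.exists_ne_zero_int_vec_abs_le_of_rank_add_one
    (M.submatrix id ((↑) : support x → ι)) (fun i k => hM i k) ha hrank (htcard ▸ ht)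
  set q : ι → ℤ := extend (↑) y 0
  have hqx : support q ⊆ support x := support_extend_val_zero_subset y
  have hqy : q ∘ (↑) = y := funext (Subtype.val_injective.extend_apply y 0)
  have hqx' : support (fun j => (q j : ℚ)) ⊆ support x :=
    (support_comp_subset Int.cast_zero _).trans hqx
  have hqW : (fun j => (q j : ℚ)) ∈ LinearMap.ker (M.map ((↑) : ℤ → ℚ)).mulVecLin := by
    rw [LinearMap.mem_ker, mulVecLin_apply, mulVec_eq_submatrix_mulVec_comp _ hqx',
      submatrix_map]
    ext i
    have := RingHom.map_mulVec (Int.castRingHom ℚ) (M.submatrix id ((↑) : support x → ι)) y i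
    rw [hNy] at this
    simpa [← hqy, Function.comp_def] using this.symm
  have hq0 : (fun j => (q j : ℚ)) ≠ 0 := fun h =>
    hy0 (funext fun k => by simpa [← hqy] using congrFun h k)
  obtain ⟨μ, hμ, hμq⟩ := hx.exists_ne_zero_smul_eq hqW hq0 hqx'
  refine ⟨q, μ, hμ, hμq.symm, fun j => ?_⟩
  rw [← htcard]
  by_cases hj : j ∈ support x
  · rw [show q j = y ⟨j, hj⟩ from Subtype.val_injective.extend_apply y 0 ⟨j, hj⟩]
    exact hy _
  · rw [notMem_support.1 fun h => hj (hqx h), abs_zero]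
    positivity

theorem exists_int_eq_smul_abs_le_of_support_subset_pair {a : ℕ} {u : ι → ℤ}
    (hu : ∀ j, |u j| ≤ a) {x : ι → ℚ} (hux : ∑ j, (u j : ℚ) * x j = 0) {j₁ j₂ : ι}
    (hx : support x ⊆ {j₁, j₂}) (hx₁ : x j₁ ≠ 0) (hu₁ : u j₁ ≠ 0) :
    ∃ q : ι → ℤ, ∃ μ : ℚ, μ ≠ 0 ∧ (fun j => (q j : ℚ)) = μ • x ∧ ∀ j, |q j| ≤ a := by
  classical
  have hx0 : ∀ j, j ≠ j₁ ∧ j ≠ j₂ → x j = 0 := fun j hj =>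
    notMem_support.1 fun h => by simpa [hj.1, hj.2] using hx h
  have hne : j₁ ≠ j₂ := by
    rintro rfl
    rw [Fintype.sum_eq_single j₁ fun j hj => by rw [hx0 j ⟨hj, hj⟩, mul_zero]] at hux
    simp_all
  rw [Fintype.sum_eq_add j₁ j₂ hne fun j hj => by rw [hx0 j hj, mul_zero]] at hux
  have hu₂ : u j₂ ≠ 0 := by
    rintro hu₂
    simp_all
  -- the kernel of `(u j₁, u j₂)` is spanned by `(u j₂, -u j₁)`
  refine ⟨Pi.single j₁ (u j₂) - Pi.single j₂ (u j₁), u j₂ / x j₁, by simp_all, ?_, fun j => ?_⟩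
  · ext j
    rcases eq_or_ne j j₁ with rfl | h₁
    · simpa [hne] using (div_mul_cancel₀ _ hx₁).symm
    rcases eq_or_ne j j₂ with rfl | h₂
    · rw [Pi.smul_apply, smul_eq_mul, div_mul_eq_mul_div, eq_div_iff hx₁]
      simp [h₁]
      linarith
    · simp [h₁, h₂, hx0 j ⟨h₁, h₂⟩]
  · rcases eq_or_ne j j₁ with rfl | h₁
    · simpa [hne] using hu j₂
    rcases eq_or_ne j j₂ with rfl | h₂
    · simpa [h₁] using hu j₁
    · simp [h₁, h₂]

-- Done by hand: for two-element supports Siegel's lemma only bounds the entries by `2 a`,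
-- which is too weak when `a = d = 1`.
theorem IsElementary.exists_int_eq_smul_abs_le_of_le_two {α : Type*} [Fintype α]
    {M : Matrix α ι ℤ} {a : ℕ} (hM : ∀ i j, |M i j| ≤ a) (ha : 1 ≤ a) {x : ι → ℚ}
    (hx : IsElementary (LinearMap.ker (M.map ((↑) : ℤ → ℚ)).mulVecLin) x)
    (ht : (support x).ncard ≤ 2) :
    ∃ q : ι → ℤ, ∃ μ : ℚ, μ ≠ 0 ∧ (fun j => (q j : ℚ)) = μ • x ∧ ∀ j, |q j| ≤ a := by
  classical
  obtain ⟨j₁, hj₁⟩ := support_nonempty_iff.2 hx.2.1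
  by_cases hcol : ∀ i, M i j₁ = 0
  · have hW : Pi.single j₁ (1 : ℚ) ∈ LinearMap.ker (M.map ((↑) : ℤ → ℚ)).mulVecLin := by
      ext i
      simp [hcol]
    obtain ⟨μ, hμ, hμe⟩ := hx.exists_ne_zero_smul_eq hW (by simp)
      (Pi.support_single_subset.trans (Set.singleton_subset_iff.2 hj₁))
    refine ⟨Pi.single j₁ 1, μ, hμ, ?_, fun j => ?_⟩
    · rw [hμe]
      ext j
      by_cases hj : j = j₁ <;> simp [hj]
    · by_cases hj : j = j₁ <;> simp [hj, ha]
  push Not at hcol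
  obtain ⟨i, hi⟩ := hcol
  obtain ⟨j₂, hj₂⟩ := Set.exists_subset_pair_of_ncard_le_two hj₁ ht
  exact exists_int_eq_smul_abs_le_of_support_subset_pair (hM i)
    (congrFun (LinearMap.mem_ker.1 hx.1) i) hj₂ hj₁ hi

theorem sum_le_ncard_support_nsmul {M : Type*} [AddCommMonoid M] [PartialOrder M]
    [IsOrderedAddMonoid M] {f : ι → M} {h : M} (hf : ∀ j, f j ≤ h) :
    ∑ j, f j ≤ (support f).ncard • h := by
  classical
  rw [Set.ncard_eq_toFinset_card', ← Finset.sum_subset (subset_univ (support f).toFinset)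
    fun j _ hj => notMem_support.1 (by simpa using hj)]
  exact sum_le_card_nsmul _ _ _ fun j _ => hf j

theorem IsElementary.exists_int_eq_smul_abs_le_sum_abs_le {d : ℕ} {M : Matrix (Fin d) ι ℤ}
    {a : ℕ} (hM : ∀ i j, |M i j| ≤ a) (ha : 1 ≤ a) (hd : 1 ≤ d) {x : ι → ℚ}
    (hx : IsElementary (LinearMap.ker (M.map ((↑) : ℤ → ℚ)).mulVecLin) x) :
    ∃ q : ι → ℤ, ∃ μ : ℚ, μ ≠ 0 ∧ (fun j => (q j : ℚ)) = μ • x ∧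
      (∀ j, |q j| ≤ (a * d) ^ (2 * d + 3)) ∧ ∑ j, |q j| ≤ 2 * (a * d) ^ (2 * d + 3) := by
  have hsupp {q : ι → ℤ} {μ : ℚ} (hμ : μ ≠ 0) (hq : (fun j => (q j : ℚ)) = μ • x) :
      (support fun j => |q j|).ncard = (support x).ncard := by
    rw [show (support fun j => |q j|) = support q from support_comp_eq _ abs_eq_zero q,
      ← support_const_smul_of_ne_zero μ x hμ, ← hq]
    exact congrArg Set.ncard (support_comp_eq _ Int.cast_eq_zero q).symm
  rcases le_or_gt (support x).ncard 2 with ht | ht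
  · obtain ⟨q, μ, hμ, hq, hqa⟩ := hx.exists_int_eq_smul_abs_le_of_le_two hM ha ht
    have haB : (a : ℤ) ≤ (a * d) ^ (2 * d + 3) := by exact_mod_cast le_mul_pow_two_mul_add_three hd
    refine ⟨q, μ, hμ, hq, fun j => (hqa j).trans haB, (sum_le_ncard_support_nsmul hqa).trans ?_⟩
    rw [hsupp hμ hq, nsmul_eq_mul]
    gcongr
    exact_mod_cast ht
  · obtain ⟨q, μ, hμ, hq, hqt⟩ := hx.exists_int_eq_smul_abs_le_of_two_le hM ha ht.le
    have htB := mul_mul_pow_sub_one_le_mul_pow ha ht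
      (Fintype.card_fin d ▸ hx.ncard_support_le_card_add_one)
    set t := (support x).ncard
    have htB' : (t : ℤ) * (t * a) ^ (t - 1) ≤ (a * d) ^ (2 * d + 3) := by exact_mod_cast htB
    have hpow : (0 : ℤ) ≤ (t * a) ^ (t - 1) := by positivity
    refine ⟨q, μ, hμ, hq, fun j => (hqt j).trans ?_, (sum_le_ncard_support_nsmul hqt).trans ?_⟩
    · nlinarith
    · rw [hsupp hμ hq, nsmul_eq_mul]
      nlinarith

theorem exists_small_nat_vec_mem_ker_support_subset {d : ℕ} {M : Matrix (Fin d) ι ℤ} {a : ℕ}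
    (hM : ∀ i j, |M i j| ≤ a) (ha : 1 ≤ a) (hd : 1 ≤ d) {y : ι → ℚ}
    (hyW : y ∈ LinearMap.ker (M.map ((↑) : ℤ → ℚ)).mulVecLin) (hy : 0 ≤ y) (hy0 : y ≠ 0) :
    ∃ q ∈ LinearMap.ker (M.map ((↑) : ℤ → ℚ)).mulVecLin, 0 ≤ q ∧ q ≠ 0 ∧
      support q ⊆ support y ∧ ∑ j, q j ≤ 2 * (((a * d) ^ (2 * d + 3) : ℕ) : ℚ) ∧
      ∃ q' : ι → ℕ, (∀ j, q' j ≤ (a * d) ^ (2 * d + 3)) ∧ q = fun j => (q' j : ℚ) := by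
  obtain ⟨x, hx, hx0, hxy⟩ := exists_isElementary_nonneg_support_subset hyW hy hy0
  obtain ⟨q, μ, hμ, hqx, hqB, hqsum⟩ := hx.exists_int_eq_smul_abs_le_sum_abs_le hM ha hd
  have hq' : (fun j => ((q j).natAbs : ℚ)) = |μ| • x := by
    ext j
    rw [Nat.cast_natAbs, Int.cast_abs, congrFun hqx j, Pi.smul_apply, smul_eq_mul,
      Pi.smul_apply, smul_eq_mul, abs_mul, abs_of_nonneg (hx0 j)]
  refine ⟨_, ?_, fun j => Nat.cast_nonneg _, ?_, ?_, ?_, fun j => (q j).natAbs,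
    fun j => by zify; exact hqB j, rfl⟩
  · rw [hq']
    exact Submodule.smul_mem _ _ hx.1
  · rw [hq']
    exact smul_ne_zero (abs_ne_zero.2 hμ) hx.2.1
  · rw [hq', support_const_smul_of_ne_zero _ _ (abs_ne_zero.2 hμ)]
    exact hxy
  · have : ((∑ j, |q j| : ℤ) : ℚ) ≤ 2 * (a * d) ^ (2 * d + 3) := by exact_mod_cast hqsum
    push_cast [Nat.cast_natAbs] at this ⊢
    exact this

theorem exists_nat_vec_ne_zero_lt_mem_ker {d : ℕ} {M : Matrix (Fin d) ι ℤ} {a : ℕ}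
    (hM : ∀ i j, |M i j| ≤ a) (ha : 1 ≤ a) (hd : 1 ≤ d) (hι : 0 < Fintype.card ι) {c : ι → ℕ}
    (hcW : (fun j => (c j : ℚ)) ∈ LinearMap.ker (M.map ((↑) : ℤ → ℚ)).mulVecLin)
    (hbig : 2 * Fintype.card ι * (a * d) ^ (2 * d + 3) ≤ ∑ j, c j) :
    ∃ q : ι → ℕ, q ≠ 0 ∧ q < c ∧
      (fun j => (q j : ℚ)) ∈ LinearMap.ker (M.map ((↑) : ℤ → ℚ)).mulVecLin := by
  have hB : 0 < (a * d) ^ (2 * d + 3) := by positivity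
  have hc0 : (fun j => (c j : ℚ)) ≠ 0 := fun h => by
    have : ∑ j, c j = 0 := sum_eq_zero fun j _ => by simpa using congrFun h j
    nlinarith
  obtain ⟨_, hqW, hq0, ⟨q, hqB, rfl⟩, r, hr, hrq, hsum⟩ := exists_smul_le_sum_le_ncard_mul
    (fun y hyW hy hy0 => exists_small_nat_vec_mem_ker_support_subset hM ha hd hyW hy hy0) hcW
    (fun j => Nat.cast_nonneg (c j)) hc0
  set B := (a * d) ^ (2 * d + 3)
  have hr1 : 1 ≤ r := by
    have hN : ((support fun j => (c j : ℚ)).ncard : ℚ) ≤ Fintype.card ι := by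
      exact_mod_cast (Set.ncard_le_card _).trans_eq Nat.card_eq_fintype_card
    have hc : (2 * Fintype.card ι * B : ℚ) ≤ ∑ j, (c j : ℚ) := by exact_mod_cast hbig
    have hιB : (0 : ℚ) < Fintype.card ι * B := by positivity
    nlinarith [mul_le_mul_of_nonneg_right hN (by positivity : (0 : ℚ) ≤ 2 * B * r)]
  have hqc : q ≤ c := fun j => by
    have := hrq j
    simp only [Pi.smul_apply, smul_eq_mul] at this
    exact_mod_cast (le_mul_of_one_le_left (Nat.cast_nonneg _) hr1).trans this
  refine ⟨q, fun h => hq0 (by ext j; simp [h]), hqc.lt_of_ne fun hqc' => ?_, hqW⟩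
  have : ∑ j, q j ≤ Fintype.card ι * B := by
    simpa using sum_le_sum fun j (_ : j ∈ univ) => hqB j
  rw [← hqc'] at hbig
  nlinarith [Nat.mul_pos hι hB]

end IntegerVectors

/-- splitting of large nonnegative integer solutions. If `M`
is a `d × n` integer matrix with entries of absolute value at most `a`, and
`c ∈ ℕ^n` satisfies `M c = 0` and `‖c‖₁ ≥ 2 n (ad)^(2d+3)`, then `c` splits as
`c = c₁ + c₂` with `c₁, c₂ ∈ ℕ^n` nonzero and `M c₁ = 0`, `M c₂ = 0`. -/
theorem stmt4 (d n a : ℕ) (hd : 0 < d) (hn : 0 < n) (ha : 0 < a)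
    (M : Fin d → Fin n → ℤ) (hM : ∀ i j, |M i j| ≤ (a : ℤ))
    (c : Fin n → ℕ)
    (hMc : ∀ i, ∑ j, M i j * (c j : ℤ) = 0)
    (hbig : 2 * n * (a * d) ^ (2 * d + 3) ≤ ∑ j, c j) :
    ∃ c₁ c₂ : Fin n → ℕ, c₁ ≠ 0 ∧ c₂ ≠ 0 ∧ c₁ + c₂ = c ∧
      (∀ i, ∑ j, M i j * (c₁ j : ℤ) = 0) ∧
      (∀ i, ∑ j, M i j * (c₂ j : ℤ) = 0) := by
  have hcW := (mem_ker_map_intCast_iff (M := M)).2 hMc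
  obtain ⟨q, hq0, hqc, hqW⟩ := exists_nat_vec_ne_zero_lt_mem_ker hM ha hd
    (by simpa using hn) hcW (by simpa using hbig)
  have hcqW : (fun j => ((c - q) j : ℚ)) ∈
      LinearMap.ker (Matrix.map M ((↑) : ℤ → ℚ)).mulVecLin := by
    convert sub_mem hcW hqW using 1
    ext j
    simp [Nat.cast_sub (hqc.le j)]
  exact ⟨q, c - q, hq0, fun h => hqc.not_ge (tsub_eq_zero_iff_le.1 h),
    add_tsub_cancel_of_le hqc.le, mem_ker_map_intCast_iff.1 hqW, mem_ker_map_intCast_iff.1 hcqW⟩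
end

section
/- Fix positive integers k and n, and let x_1, ..., x_{k+1} be distinct primary domain types. Consider the monomer collection (the depth-k, redundancy-n translator cascade, without input) consisting of: for each i in {1, ..., k}, n copies of the two-domain monomer {x_i*, x_{i+1}} and n copies of the single-domain monomer {x_i}; one monomer consisting of n copies of x_{k+1}* ; and one terminator monomer consisting of n copies of x_{k+1}. If γ is a saturated configuration of this monomer collection in which the terminator monomer is free (forms a polymer by itself, bound to no other monomer; i.e., the configuration has output 1), then S(γ) = n(k-1) + 2. -/
/-! The depth-`k`, redundancy-`n` translator cascade (without input).
Domain `(i : Fin (k+1))` represents the primary domain type `x_{i+1}`. -/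

/-- The translator gate monomer `{x_i*, x_{i+1}}` of layer `i` (0-indexed). -/
def gateMon (k : ℕ) (i : Fin k) : Monomer (Fin (k + 1)) where
  prim := fun x => if x = i.succ then 1 else 0
  star := fun x => if x = i.castSucc then 1 else 0

/-- The single-domain monomer `{x_i}` of layer `i` (0-indexed). -/
def singleMon (k : ℕ) (i : Fin k) : Monomer (Fin (k + 1)) where
  prim := fun x => if x = i.castSucc then 1 else 0
  star := fun _ => 0

/-- The monomer consisting of `n` copies of `x_{k+1}*`. -/
def collectorMon (k n : ℕ) : Monomer (Fin (k + 1)) where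
  prim := fun _ => 0
  star := fun x => if x = Fin.last k then n else 0

/-- The terminator monomer consisting of `n` copies of `x_{k+1}`. -/
def terminatorMon (k n : ℕ) : Monomer (Fin (k + 1)) where
  prim := fun x => if x = Fin.last k then n else 0
  star := fun _ => 0

/-- Index set of the cascade collection: for each layer `i ∈ {1,…,k}`, `n`
copies of the gate monomer `{x_i*, x_{i+1}}` and `n` copies of `{x_i}`, plus
one collector monomer `{n ⬝ x_{k+1}*}` and one terminator monomer
`{n ⬝ x_{k+1}}`. -/
def CascadeIdx (k n : ℕ) : Type := (Fin k × Fin n) ⊕ ((Fin k × Fin n) ⊕ (Unit ⊕ Unit))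

/-- The translator-cascade monomer collection. -/
def cascadeMon (k n : ℕ) : CascadeIdx k n → Monomer (Fin (k + 1)) :=
  Sum.elim (fun p => gateMon k p.1)
    (Sum.elim (fun p => singleMon k p.1)
      (Sum.elim (fun _ => collectorMon k n) (fun _ => terminatorMon k n)))

/-- The index of the terminator monomer. -/
def termIdx (k n : ℕ) : CascadeIdx k n := Sum.inr (Sum.inr (Sum.inr ()))


/-! Every gate and every single carries exactly one primary domain instance, the collector none,
and the terminator, being free, has none of its `n` bound. So every monomer has at most one bond
to a "parent", and the bonds lead from a single `{x_i}` to a gate `{x_i*, x_{i+1}}`, from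
there to the next gate, and from the last gate to the collector: they strictly decrease a rank.
The binding graph is therefore a forest with one edge per bond, and `S(γ)` is the number of
monomers, `2kn + 2`, minus the number of bonds. Saturation binds every complementary domain,
because each `x_i*` can be paired with its own copy of `x_i` (on a single or on the terminator),
so there are `(k + 1)n` bonds and `S(γ) = n(k - 1) + 2`. -/

namespace SimpleGraph

variable {V B : Type*} {child parent : B → V} {r : V → ℕ}

open Classical in
noncomputable def forestRoot (hr : ∀ b, r (parent b) < r (child b)) (v : V) : V :=
  if h : ∃ b, child b = v then forestRoot hr (parent h.choose) else v
termination_by r v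
decreasing_by exact lt_of_lt_of_eq (hr h.choose) (congrArg r h.choose_spec)

variable (hr : ∀ b, r (parent b) < r (child b))

lemma forestRoot_notMem_range (v : V) : forestRoot hr v ∉ Set.range child := by
  fun_induction forestRoot hr v with
  | case1 v h ih => exact ih
  | case2 v h => exact h

lemma forestRoot_of_notMem_range {v : V} (hv : v ∉ Set.range child) : forestRoot hr v = v := by
  rw [forestRoot, dif_neg (show ¬∃ b, child b = v from hv)]

lemma forestRoot_child (hc : Function.Injective child) (b : B) :
    forestRoot hr (child b) = forestRoot hr (parent b) := by
  have h : ∃ b', child b' = child b := ⟨b, rfl⟩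
  rw [forestRoot, dif_pos h, hc h.choose_spec]

lemma reachable_forestRoot (v : V) :
    (fromEdgeSet (Set.range fun b => s(child b, parent b))).Reachable v (forestRoot hr v) := by
  fun_induction forestRoot hr v with
  | case1 v h ih =>
    refine Adj.reachable ?_ |>.trans ih
    have hb := h.choose_spec
    rw [fromEdgeSet_adj]
    exact ⟨⟨h.choose, by simp only [hb]⟩, fun hv => (hr _).ne (congrArg r (hb.trans hv).symm)⟩
  | case2 v h => rfl

lemma forestRoot_eq_of_reachable (hc : Function.Injective child) {v w : V}
    (h : (fromEdgeSet (Set.range fun b => s(child b, parent b))).Reachable v w) :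
    forestRoot hr v = forestRoot hr w := by
  obtain ⟨p⟩ := h
  induction p with
  | nil => rfl
  | cons ha _ ih =>
    rw [← ih]
    obtain ⟨⟨b, hb⟩, -⟩ := (fromEdgeSet_adj _).mp ha
    rcases Sym2.eq_iff.mp hb with ⟨rfl, rfl⟩ | ⟨rfl, rfl⟩
    · exact forestRoot_child hr hc b
    · exact (forestRoot_child hr hc b).symm

noncomputable def connectedComponentEquivRoots (hc : Function.Injective child) :
    (fromEdgeSet (Set.range fun b => s(child b, parent b))).ConnectedComponent ≃
      ↥(Set.range child)ᶜ where
  toFun := ConnectedComponent.lift (fun v => ⟨forestRoot hr v, forestRoot_notMem_range hr v⟩)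
    fun _ _ p _ => Subtype.ext (forestRoot_eq_of_reachable hr hc ⟨p⟩)
  invFun v := connectedComponentMk _ v
  left_inv C := by
    induction C using ConnectedComponent.ind with
    | h v => exact ConnectedComponent.sound (reachable_forestRoot hr v).symm
  right_inv v := Subtype.ext (forestRoot_of_notMem_range hr v.2)

theorem card_connectedComponent_fromEdgeSet_add_card [Finite V]
    (hr : ∀ b, r (parent b) < r (child b)) (hc : Function.Injective child) :
    Nat.card (fromEdgeSet (Set.range fun b => s(child b, parent b))).ConnectedComponent +
      Nat.card B = Nat.card V := by
  rw [Nat.card_congr (connectedComponentEquivRoots hr hc), ← Nat.card_range_of_injective hc,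
    Nat.card_coe_set_eq, Nat.card_coe_set_eq, add_comm, Set.ncard_add_ncard_compl]

end SimpleGraph

instance {D I : Type} [Finite I] [Finite D] (mon : I → Monomer D) : Finite (PrimInst mon) :=
  inferInstanceAs (Finite (Σ i, Σ x, Fin ((mon i).prim x)))

instance {D I : Type} [Finite I] [Finite D] (mon : I → Monomer D) : Finite (StarInst mon) :=
  inferInstanceAs (Finite (Σ i, Σ x, Fin ((mon i).star x)))

theorem PrimInst.eq_of_fst_eq {D I : Type} [Fintype D] {mon : I → Monomer D}
    {p q : PrimInst mon} (h : p.1 = q.1) (hone : ∑ x, (mon p.1).prim x ≤ 1) : p = q := by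
  obtain ⟨i, a⟩ := p
  obtain ⟨j, b⟩ := q
  obtain rfl : i = j := h
  have : Subsingleton (Σ x, Fin ((mon i).prim x)) :=
    Fintype.card_le_one_iff_subsingleton.mp (by simpa using hone)
  rw [Subsingleton.elim a b]

theorem card_starInst {D I : Type} [Fintype I] [Fintype D] (mon : I → Monomer D) :
    Nat.card (StarInst mon) = ∑ i, ∑ x, (mon i).star x := by
  simp [StarInst]

namespace Config

variable {D I : Type} {mon : I → Monomer D}

def Bond (α : Config mon) : Type :=
  {ps : PrimInst mon × StarInst mon // α.bond ps.1 = some ps.2}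

theorem bindingGraph_eq_fromEdgeSet (α : Config mon) :
    α.bindingGraph = SimpleGraph.fromEdgeSet (Set.range fun b : α.Bond => s(b.1.1.1, b.1.2.1)) := by
  ext i j
  simp only [bindingGraph, SimpleGraph.fromEdgeSet_adj, Set.mem_range, Sym2.eq_iff]
  constructor
  · rintro ⟨hne, p, s, hb, hor⟩
    exact ⟨⟨⟨(p, s), hb⟩, hor⟩, hne⟩
  · rintro ⟨⟨⟨⟨p, s⟩, hb⟩, hor⟩, hne⟩
    exact ⟨hne, p, s, hb, hor⟩

theorem entropy_add_card_bond [Finite I] (α : Config mon) (r : I → ℕ)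
    (hr : ∀ b : α.Bond, r b.1.2.1 < r b.1.1.1)
    (hc : Function.Injective fun b : α.Bond => b.1.1.1) :
    α.entropy + Nat.card α.Bond = Nat.card I := by
  rw [entropy, bindingGraph_eq_fromEdgeSet]
  exact SimpleGraph.card_connectedComponent_fromEdgeSet_add_card hr hc

theorem Free.fst_eq_of_bond {α : Config mon} {i : I} (hi : α.Free i) {p : PrimInst mon}
    {s : StarInst mon} (hb : α.bond p = some s) (hp : p.1 = i) : s.1 = i := by
  by_contra hne
  exact hne (hi _ (SimpleGraph.Adj.reachable ⟨Ne.symm hne, p, s, hb, .inl ⟨hp, rfl⟩⟩))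

theorem Saturated.exists_bond [Finite I] [Finite D] {α : Config mon} (hsat : α.Saturated)
    {φ : StarInst mon → PrimInst mon} (hφ : Function.Injective φ)
    (hφ_type : ∀ s, (φ s).2.1 = s.2.1) (s : StarInst mon) : ∃ p, α.bond p = some s := by
  by_contra! hs
  have hbound : ∀ p : PrimInst mon, p.2.1 = s.2.1 → (α.bond p).isSome := by
    intro p hp
    rw [Option.isSome_iff_ne_none]
    exact fun hnone => hsat ⟨p, s, hp, hnone, hs⟩
  let partner (p : {p : PrimInst mon // p.2.1 = s.2.1}) : {t : StarInst mon // t.2.1 = s.2.1} :=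
    ⟨(α.bond p.1).get (hbound p.1 p.2),
      (α.compat _ _ (Option.some_get _).symm).symm.trans p.2⟩
  have hspec (p) : α.bond p.1 = some (partner p).1 := (Option.some_get _).symm
  have hpartner : Function.Injective partner := fun p q h =>
    Subtype.ext (α.inj _ _ _ (hspec p) (by rw [hspec q, h]))
  let φ' (t : {t : StarInst mon // t.2.1 = s.2.1}) : {p : PrimInst mon // p.2.1 = s.2.1} :=
    ⟨φ t.1, (hφ_type t.1).trans t.2⟩
  have hφ' : Function.Injective φ' := fun t u h => Subtype.ext (hφ (congrArg Subtype.val h))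
  obtain ⟨p, hp⟩ := Finite.surjective_of_injective (hφ'.comp hpartner) (φ' ⟨s, rfl⟩)
  exact hs p.1 (by rw [hspec p, hφ' hp])

theorem Saturated.card_bond [Finite I] [Finite D] {α : Config mon} (hsat : α.Saturated)
    {φ : StarInst mon → PrimInst mon} (hφ : Function.Injective φ)
    (hφ_type : ∀ s, (φ s).2.1 = s.2.1) : Nat.card α.Bond = Nat.card (StarInst mon) := by
  refine Nat.card_congr (Equiv.ofBijective (fun b : α.Bond => b.1.2) ⟨?_, ?_⟩)
  · rintro ⟨⟨p, s⟩, hb⟩ ⟨⟨q, t⟩, hc⟩ (rfl : s = t)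
    obtain rfl := α.inj p q s hb hc
    rfl
  · intro s
    obtain ⟨p, hp⟩ := hsat.exists_bond hφ hφ_type s
    exact ⟨⟨(p, s), hp⟩, rfl⟩

end Config

theorem eq_of_lt_ite {α : Type} {x y : α} [Decidable (x = y)] {c m : ℕ}
    (h : c < if x = y then m else 0) : x = y := by
  by_contra hne
  simp [hne] at h

section Cascade

variable (k n : ℕ)

instance : Fintype (CascadeIdx k n) :=
  inferInstanceAs (Fintype ((Fin k × Fin n) ⊕ ((Fin k × Fin n) ⊕ (Unit ⊕ Unit))))

theorem card_cascadeIdx : Nat.card (CascadeIdx k n) = 2 * k * n + 2 := by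
  rw [Nat.card_eq_fintype_card]
  change Fintype.card ((Fin k × Fin n) ⊕ ((Fin k × Fin n) ⊕ (Unit ⊕ Unit))) = _
  simp only [Fintype.card_sum, Fintype.card_prod, Fintype.card_fin, Fintype.card_unit]
  ring

theorem card_starInst_cascadeMon : Nat.card (StarInst (cascadeMon k n)) = (k + 1) * n := by
  rw [card_starInst]
  change ∑ i : (Fin k × Fin n) ⊕ ((Fin k × Fin n) ⊕ (Unit ⊕ Unit)), _ = _
  simp [Fintype.sum_sum_type, cascadeMon, gateMon, singleMon, collectorMon, terminatorMon,
    Finset.sum_ite_eq']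
  ring

def cascadeRank : CascadeIdx k n → ℕ
  | Sum.inl (l, _) => 2 * (k - l) - 1
  | Sum.inr (Sum.inl (l, _)) => 2 * (k - l)
  | Sum.inr (Sum.inr (Sum.inl _)) => 0
  | Sum.inr (Sum.inr (Sum.inr _)) => 1

theorem cascadeRank_lt_of_type_eq (p : PrimInst (cascadeMon k n)) (s : StarInst (cascadeMon k n))
    (h : p.2.1 = s.2.1) : cascadeRank k n s.1 < cascadeRank k n p.1 := by
  obtain ⟨i, x, f⟩ := p
  obtain ⟨j, y, g⟩ := s
  obtain rfl : x = y := h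
  rcases i with ⟨l, -⟩ | ⟨l, -⟩ | - | - <;> rcases j with ⟨m, -⟩ | ⟨m, -⟩ | - | - <;>
    first
    | exact f.elim0
    | exact g.elim0
    | have hf := eq_of_lt_ite f.isLt
      have hg := eq_of_lt_ite g.isLt
      rw [hf, Fin.ext_iff] at hg
      simp only [cascadeRank, Fin.val_succ, Fin.val_castSucc, Fin.val_last] at hg ⊢
      omega

def cascadeStarToPrim : StarInst (cascadeMon k n) → PrimInst (cascadeMon k n)
  | ⟨Sum.inl p, x, f⟩ => ⟨Sum.inr (Sum.inl p), x, f⟩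
  | ⟨Sum.inr (Sum.inr (Sum.inl _)), x, f⟩ => ⟨termIdx k n, x, f⟩
  | ⟨Sum.inr (Sum.inl _), _, f⟩ => f.elim0
  | ⟨Sum.inr (Sum.inr (Sum.inr _)), _, f⟩ => f.elim0

theorem cascadeStarToPrim_injective : Function.Injective (cascadeStarToPrim k n) := by
  rintro ⟨p | p | u | u, x, f⟩ ⟨q | q | v | v, y, g⟩ h <;>
    first
    | exact f.elim0
    | exact g.elim0
    | obtain ⟨h1, h2⟩ := Sigma.mk.inj_iff.mp h
      cases h1 <;> cases h2 <;> rfl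

theorem cascadeStarToPrim_type (s : StarInst (cascadeMon k n)) :
    (cascadeStarToPrim k n s).2.1 = s.2.1 := by
  obtain ⟨i, x, f⟩ := s
  rcases i with p | p | - | -
  · rfl
  · exact f.elim0
  · rfl
  · exact f.elim0

theorem sum_prim_cascadeMon_le_one {i : CascadeIdx k n} (hi : i ≠ termIdx k n) :
    ∑ x, (cascadeMon k n i).prim x ≤ 1 := by
  cases i with
  | inl p => simp [cascadeMon, gateMon]
  | inr i => cases i with
    | inl p => simp [cascadeMon, singleMon]
    | inr i => cases i with
      | inl _ => simp [cascadeMon, collectorMon]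
      | inr _ => exact absurd rfl hi

theorem Config.Free.bond_fst_ne_termIdx {γ : Config (cascadeMon k n)}
    (hfree : γ.Free (termIdx k n)) {p : PrimInst (cascadeMon k n)} {s : StarInst (cascadeMon k n)}
    (hb : γ.bond p = some s) : p.1 ≠ termIdx k n := by
  intro hp
  obtain ⟨j, y, g⟩ := s
  obtain rfl : j = termIdx k n := hfree.fst_eq_of_bond hb hp
  exact g.elim0

theorem Config.Free.bond_fst_injective {γ : Config (cascadeMon k n)}
    (hfree : γ.Free (termIdx k n)) : Function.Injective fun b : γ.Bond => b.1.1.1 := by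
  rintro ⟨⟨p, s⟩, hb⟩ ⟨⟨q, t⟩, hc⟩ (h : p.1 = q.1)
  obtain rfl : p = q :=
    PrimInst.eq_of_fst_eq h (sum_prim_cascadeMon_le_one k n (hfree.bond_fst_ne_termIdx k n hb))
  obtain rfl : s = t := Option.some_injective _ (hb.symm.trans hc)
  rfl

end Cascade

theorem stmt7_general (k n : ℕ) (hk : 0 < k)
    (γ : Config (cascadeMon k n)) (hsat : γ.Saturated)
    (hfree : γ.Free (termIdx k n)) :
    γ.entropy = n * (k - 1) + 2 := by
  have hforest := γ.entropy_add_card_bond (cascadeRank k n)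
    (fun b => cascadeRank_lt_of_type_eq k n b.1.1 b.1.2 (γ.compat _ _ b.2))
    (hfree.bond_fst_injective k n)
  rw [hsat.card_bond (cascadeStarToPrim_injective k n) (cascadeStarToPrim_type k n),
    card_starInst_cascadeMon, card_cascadeIdx] at hforest
  obtain ⟨k, rfl⟩ := Nat.exists_eq_add_of_lt hk
  simp only [zero_add, Nat.add_sub_cancel] at hforest ⊢
  linarith

/-- Every saturated configuration of the depth-`k`,
redundancy-`n` translator cascade without input in which the terminator
monomer is free (output `1`) has entropy exactly `n(k-1) + 2`. -/
theorem stmt7 (k n : ℕ) (hk : 0 < k) (hn : 0 < n)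
    (γ : Config (cascadeMon k n)) (hsat : γ.Saturated)
    (hfree : γ.Free (termIdx k n)) :
    γ.entropy = n * (k - 1) + 2 :=
  stmt7_general k n hk γ hsat hfree
end

section
/- Fix positive integers k and n, and let x_1, ..., x_{k+1} be distinct primary domain types. Consider the monomer collection (the depth-k, redundancy-n translator cascade, without input) consisting of: for each i in {1, ..., k}, n copies of the two-domain monomer {x_i*, x_{i+1}} and n copies of the single-domain monomer {x_i}; one monomer consisting of n copies of x_{k+1}* ; and one terminator monomer consisting of n copies of x_{k+1}. Then there exists a saturated configuration α of this monomer collection in which the terminator monomer is not free (i.e., the configuration has output 0) and S(α) = nk + 1; namely, the configuration in which, for each i, each x_i* domain on a monomer {x_i*, x_{i+1}} is bound to a monomer {x_i}, and the n domains x_{k+1}* are bound to the n domains x_{k+1} of the terminator monomer. -/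
/-! The polymers of the configuration are the `n k` pairs formed by a gate monomer
`{x_i*, x_{i+1}}` and its own single monomer `{x_i}`, plus the one polymer in which the
terminator binds all `n` domains of the collector `{n ⬝ x_{k+1}*}`. Every complementary domain is
bound, so the configuration is saturated. To count polymers, label every monomer by its intended
polymer: bonds respect the labels, and every monomer is reachable from a fixed representative of
its label. -/

namespace SimpleGraph

variable {V β : Type*} {G : SimpleGraph V}

lemma Walk.apply_eq_of_adj {f : V → β} (hf : ∀ a b, G.Adj a b → f a = f b) :
    ∀ {v w : V}, G.Walk v w → f v = f w
  | _, _, .nil => rfl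
  | _, _, .cons h p => (hf _ _ h).trans (p.apply_eq_of_adj hf)

lemma natCard_connectedComponent_eq_of_labelling (f : V → β)
    (hf : ∀ a b, G.Adj a b → f a = f b) (rep : β → V) (hrep : ∀ b, f (rep b) = b)
    (hreach : ∀ v, G.Reachable (rep (f v)) v) :
    Nat.card G.ConnectedComponent = Nat.card β := by
  refine Nat.card_eq_of_bijective
    (ConnectedComponent.lift f fun _ _ p _ => p.apply_eq_of_adj hf)
    ⟨fun C D => ?_, fun b => ⟨G.connectedComponentMk (rep b), hrep b⟩⟩
  induction C, D using ConnectedComponent.ind₂ with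
  | h v w =>
    intro (hvw : f v = f w)
    exact ConnectedComponent.sound <| (hreach v).symm.trans (hvw ▸ hreach w)

end SimpleGraph

namespace Config

variable {D I : Type} {mon : I → Monomer D}

lemma saturated_of_forall_star_bound (α : Config mon) (h : ∀ s, ∃ p, α.bond p = some s) :
    α.Saturated := by
  rintro ⟨-, s, -, -, hfree⟩
  obtain ⟨p, hp⟩ := h s
  exact hfree p hp

lemma bindingGraph_adj_of_bond {α : Config mon} {p : PrimInst mon} {s : StarInst mon}
    (hps : α.bond p = some s) (hne : p.1 ≠ s.1) : α.bindingGraph.Adj p.1 s.1 :=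
  ⟨hne, p, s, hps, Or.inl ⟨rfl, rfl⟩⟩

lemma apply_eq_of_bindingGraph_adj {β : Type*} {α : Config mon} {f : I → β}
    (hf : ∀ p s, α.bond p = some s → f p.1 = f s.1) {i j : I} (hij : α.bindingGraph.Adj i j) :
    f i = f j := by
  obtain ⟨-, p, s, hps, ⟨rfl, rfl⟩ | ⟨rfl, rfl⟩⟩ := hij
  · exact hf p s hps
  · exact (hf p s hps).symm

lemma not_free_of_bindingGraph_adj {α : Config mon} {i j : I} (hij : α.bindingGraph.Adj i j) :
    ¬ α.Free i :=
  fun hfree => hij.ne (hfree j hij.reachable).symm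

end Config

def collIdx (k n : ℕ) : CascadeIdx k n := Sum.inr (Sum.inr (Sum.inl ()))

def cascadeBond (k n : ℕ) : PrimInst (cascadeMon k n) → Option (StarInst (cascadeMon k n))
  | ⟨Sum.inl _, _, _⟩ => none
  | ⟨Sum.inr (Sum.inl q), x, m⟩ => some ⟨Sum.inl q, x, m⟩
  | ⟨Sum.inr (Sum.inr (Sum.inl _)), _, m⟩ => m.elim0
  | ⟨Sum.inr (Sum.inr (Sum.inr _)), x, m⟩ => some ⟨collIdx k n, x, m⟩

def cascadeUnbond (k n : ℕ) : StarInst (cascadeMon k n) → PrimInst (cascadeMon k n)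
  | ⟨Sum.inl q, x, m⟩ => ⟨Sum.inr (Sum.inl q), x, m⟩
  | ⟨Sum.inr (Sum.inl _), _, m⟩ => m.elim0
  | ⟨Sum.inr (Sum.inr (Sum.inl _)), x, m⟩ => ⟨termIdx k n, x, m⟩
  | ⟨Sum.inr (Sum.inr (Sum.inr _)), _, m⟩ => m.elim0

section Cascade

variable {k n : ℕ}

lemma cascadeUnbond_eq_of_cascadeBond_eq_some {p : PrimInst (cascadeMon k n)}
    {s : StarInst (cascadeMon k n)} (h : cascadeBond k n p = some s) :
    cascadeUnbond k n s = p := by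
  rcases p with ⟨q | q | u | u, x, m⟩
  · cases h
  · cases h; rfl
  · exact m.elim0
  · cases h; rfl

lemma cascadeBond_cascadeUnbond (s : StarInst (cascadeMon k n)) :
    cascadeBond k n (cascadeUnbond k n s) = some s := by
  rcases s with ⟨q | q | u | u, x, m⟩
  · rfl
  · exact m.elim0
  · rfl
  · exact m.elim0

lemma domain_eq_of_cascadeBond_eq_some {p : PrimInst (cascadeMon k n)}
    {s : StarInst (cascadeMon k n)} (h : cascadeBond k n p = some s) : p.2.1 = s.2.1 := by
  rcases p with ⟨q | q | u | u, x, m⟩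
  · cases h
  · cases h; rfl
  · exact m.elim0
  · cases h; rfl

variable (k n) in
def cascadeConfig : Config (cascadeMon k n) where
  bond := cascadeBond k n
  inj _ _ _ hp hq :=
    (cascadeUnbond_eq_of_cascadeBond_eq_some hp).symm.trans
      (cascadeUnbond_eq_of_cascadeBond_eq_some hq)
  compat _ _ := domain_eq_of_cascadeBond_eq_some

lemma cascadeConfig_saturated : (cascadeConfig k n).Saturated :=
  Config.saturated_of_forall_star_bound _ fun s => ⟨_, cascadeBond_cascadeUnbond s⟩

lemma cascadeConfig_adj_single_gate (q : Fin k × Fin n) :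
    (cascadeConfig k n).bindingGraph.Adj (Sum.inr (Sum.inl q)) (Sum.inl q) :=
  Config.bindingGraph_adj_of_bond (α := cascadeConfig k n)
    (p := ⟨Sum.inr (Sum.inl q), q.1.castSucc, ⟨0, by simp [cascadeMon, singleMon]⟩⟩)
    (s := ⟨Sum.inl q, q.1.castSucc, ⟨0, by simp [cascadeMon, gateMon]⟩⟩) rfl Sum.inr_ne_inl

lemma cascadeConfig_adj_term_coll (hn : 0 < n) :
    (cascadeConfig k n).bindingGraph.Adj (termIdx k n) (collIdx k n) :=
  Config.bindingGraph_adj_of_bond (α := cascadeConfig k n)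
    (p := ⟨termIdx k n, Fin.last k,
      ⟨0, by simpa [cascadeMon, termIdx, terminatorMon] using hn⟩⟩)
    (s := ⟨collIdx k n, Fin.last k,
      ⟨0, by simpa [cascadeMon, collIdx, collectorMon] using hn⟩⟩)
    rfl (Sum.inr_injective.ne (Sum.inr_injective.ne Sum.inr_ne_inl))

variable (k n) in
def cascadePolymer : CascadeIdx k n → (Fin k × Fin n) ⊕ Unit :=
  Sum.elim Sum.inl (Sum.elim Sum.inl fun _ => Sum.inr ())

lemma cascadePolymer_eq_of_cascadeBond_eq_some {p : PrimInst (cascadeMon k n)}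
    {s : StarInst (cascadeMon k n)} (h : cascadeBond k n p = some s) :
    cascadePolymer k n p.1 = cascadePolymer k n s.1 := by
  rcases p with ⟨q | q | u | u, x, m⟩
  · cases h
  · cases h; rfl
  · exact m.elim0
  · cases h; rfl

lemma cascadeConfig_entropy (hn : 0 < n) : (cascadeConfig k n).entropy = n * k + 1 := by
  have hcard : Nat.card ((Fin k × Fin n) ⊕ Unit) = n * k + 1 := by
    simp [Nat.card_eq_fintype_card, mul_comm]
  refine (SimpleGraph.natCard_connectedComponent_eq_of_labelling (cascadePolymer k n)
    (fun _ _ => Config.apply_eq_of_bindingGraph_adj fun _ _ =>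
      cascadePolymer_eq_of_cascadeBond_eq_some)
    (Sum.elim Sum.inl fun _ => termIdx k n) (by rintro (q | ⟨⟩) <;> rfl) ?_).trans hcard
  rintro (q | q | ⟨⟩ | ⟨⟩)
  · rfl
  · exact (cascadeConfig_adj_single_gate q).symm.reachable
  · exact (cascadeConfig_adj_term_coll hn).reachable
  · rfl

end Cascade

theorem stmt8_general (k n : ℕ) (hn : 0 < n) :
    ∃ α : Config (cascadeMon k n), α.Saturated ∧ ¬ α.Free (termIdx k n) ∧
      α.entropy = n * k + 1 :=
  ⟨cascadeConfig k n, cascadeConfig_saturated,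
    Config.not_free_of_bindingGraph_adj (cascadeConfig_adj_term_coll hn),
    cascadeConfig_entropy hn⟩

/-- The depth-`k`, redundancy-`n` translator cascade without
input has a saturated configuration in which the terminator monomer is not
free (output `0`) and whose entropy is `nk + 1`. -/
theorem stmt8 (k n : ℕ) (hk : 0 < k) (hn : 0 < n) :
    ∃ α : Config (cascadeMon k n), α.Saturated ∧ ¬ α.Free (termIdx k n) ∧
      α.entropy = n * k + 1 :=
  stmt8_general k n hn
end
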